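/- arXiv:2201.00077 — 7 statements merged into one kernel-verified Lean document; each statement's English description precedes it below -/
import Mathlib

section
/- Let H be a complex Hilbert space, T a bounded self-adjoint operator on H, and P a bounded self-adjoint operator on H which is positive (⟨Pv, v⟩ ≥ 0 for all v) and invertible. Then T is positive (⟨Tv, v⟩ ≥ 0 for all v ∈ H) if and only if the spectrum of the bounded operator P⁻¹ ∘ T is contained in the nonnegative real half-line [0, ∞) ⊆ ℂ. -/
/-!
Write `P⁻¹ = C * C` with `C` a self-adjoint unit (the square root of the strictly positive
`P⁻¹`). Then `P⁻¹ T = C⁻¹ (C T C) C` is similar to `C T C`, so the two have the same spectrum;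
`C T C = C* T C` is self-adjoint, hence nonnegative iff its spectrum is, and a congruence by a
unit preserves nonnegativity, so `0 ≤ C T C ↔ 0 ≤ T`.
-/

open ContinuousLinearMap

lemma spectrum.units_mul_comm {R A : Type*} [CommSemiring R] [Ring A] [Algebra R A]
    (u : Aˣ) (a : A) : spectrum R (↑u * a) = spectrum R (a * ↑u) := by
  simpa [mul_assoc] using (spectrum.units_conjugate' (R := R) (a := ↑u * a) (u := u)).symm

open scoped ComplexOrder in
theorem CStarAlgebra.nonneg_iff_spectrum_inv_mul_nonneg {A : Type*} [CStarAlgebra A]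
    [PartialOrder A] [StarOrderedRing A] {p : Aˣ} (hp : 0 ≤ (p : A)) {t : A}
    (ht : IsSelfAdjoint t) :
    0 ≤ t ↔ ∀ z ∈ spectrum ℂ (↑p⁻¹ * t), 0 ≤ z := by
  obtain ⟨c, hc_unit, hc_sa, hp_inv⟩ :=
    CStarAlgebra.isStrictlyPositive_iff_exists_isUnit_and_isSelfAdjoint_and_eq_mul_self.mp
      (p⁻¹.isUnit.isStrictlyPositive (CFC.inv_nonneg_of_nonneg p hp))
  lift c to Aˣ using hc_unit
  have hconj_sa : IsSelfAdjoint (↑c * t * ↑c : A) := by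
    simpa [hc_sa.star_eq] using ht.conjugate' (c : A)
  rw [hp_inv, mul_assoc, spectrum.units_mul_comm,
    ← StarOrderedRing.nonneg_iff_spectrum_nonneg (R := ℂ) _ hconj_sa.isStarNormal]
  nth_rw 1 [← hc_sa.star_eq]
  exact c.isUnit.star_left_conjugate_nonneg_iff.symm

lemma ContinuousLinearMap.nonneg_iff_re_inner_nonneg {𝕜 H : Type*} [RCLike 𝕜]
    [NormedAddCommGroup H] [InnerProductSpace 𝕜 H] [CompleteSpace H] {T : H →L[𝕜] H}
    (hT : IsSelfAdjoint T) : 0 ≤ T ↔ ∀ v, 0 ≤ RCLike.re (inner 𝕜 (T v) v) := by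
  rw [nonneg_iff_isPositive, isPositive_def']
  exact and_iff_right hT

/-- Let `T` be bounded self-adjoint and `P` bounded self-adjoint, positive and invertible
on a complex Hilbert space. Then `T` is positive iff the spectrum of `P⁻¹ ∘ T` is
contained in the nonnegative real half-line in `ℂ`. -/
theorem positive_iff_spectrum_nonneg
    {H : Type*} [NormedAddCommGroup H] [InnerProductSpace ℂ H] [CompleteSpace H]
    (T P Pinv : H →L[ℂ] H)
    (hT : IsSelfAdjoint T) (hP : IsSelfAdjoint P)
    (hPpos : ∀ v : H, 0 ≤ (inner ℂ (P v) v : ℂ).re)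
    (hPinv1 : Pinv.comp P = ContinuousLinearMap.id ℂ H)
    (hPinv2 : P.comp Pinv = ContinuousLinearMap.id ℂ H) :
    (∀ v : H, 0 ≤ (inner ℂ (T v) v : ℂ).re) ↔
      spectrum ℂ (Pinv.comp T) ⊆ {z : ℂ | 0 ≤ z.re ∧ z.im = 0} := by
  let p : (H →L[ℂ] H)ˣ := ⟨P, Pinv, hPinv2, hPinv1⟩
  have hp : 0 ≤ (p : H →L[ℂ] H) := (nonneg_iff_re_inner_nonneg hP).mpr hPpos
  refine ((nonneg_iff_re_inner_nonneg hT).symm.trans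
    (CStarAlgebra.nonneg_iff_spectrum_inv_mul_nonneg hp hT)).trans ?_
  simp only [Complex.nonneg_iff, eq_comm (a := (0 : ℝ))]
  rfl
end

section
/- For every t > 0: (i) for every continuous function f : Ω → ℂ, the function I_t f(η) = ∫_Ω d(ξ, η)^{-(1-2t)D} f(ξ) dν(ξ) is continuous on Ω; and (ii) the resulting linear operator I_t : C(Ω) → C(Ω) (with the supremum norm) is a compact operator, i.e. the image of the unit ball of C(Ω) is relatively compact in C(Ω). -/
open MeasureTheory Metric Filter Topology Uniformity
open scoped ENNReal NNReal

/-!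
For `e = -(1 - 2t) D > -D`, the kernel `k η ξ = d(ξ, η) ^ e` is bounded in `L¹(ν)` and
`η ↦ k η ∈ L¹(ν)` is uniformly continuous. For any such kernel, `f ↦ ∫ k η ξ f ξ dν` maps the
unit ball of `C(Ω)` to a uniformly bounded, equicontinuous family, which is relatively compact
by Arzelà–Ascoli. When `e ≥ 0` the kernel is continuous on the compact space `Ω × Ω`. When
`e < 0`, summing the upper Ahlfors bound `ν(B(η, s)) ≲ s ^ D` over dyadic annuli gives
`∫_{B(η, ε)} d(ξ, η) ^ e dν ≲ ε ^ (D + e)`, which controls `‖k η - k η'‖₁` near the diagonal,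
while away from it `x ↦ x ^ e` is Lipschitz.
-/

theorem ContinuousMap.isCompact_closure_of_equicontinuous {α β : Type*} [TopologicalSpace α]
    [CompactSpace α] [MetricSpace β] {s : Set β} (hs : IsCompact s) {A : Set C(α, β)}
    (hA : ∀ f ∈ A, ∀ x, f x ∈ s) (hA_eq : Equicontinuous ((↑) : A → α → β)) :
    IsCompact (closure A) := by
  let e := (isometryEquivBoundedOfCompact α β).toHomeomorph
  have he_eq : Equicontinuous ((↑) : e '' A → α → β) :=
    hA_eq.comp fun g : e '' A =>
      ⟨e.symm g, by obtain ⟨f, hf, hfg⟩ := g.2; simpa [← hfg] using hf⟩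
  have hcpt := BoundedContinuousFunction.arzela_ascoli s hs (e '' A)
    (by rintro _ x ⟨f, hf, rfl⟩; exact hA f hf x) he_eq
  rwa [← e.image_closure, e.isCompact_image] at hcpt

theorem enorm_integral_ofReal_mul_le {X : Type*} [TopologicalSpace X] [CompactSpace X]
    [MeasurableSpace X] {μ : Measure X} (g : X → ℝ) (f : C(X, ℂ)) :
    ‖∫ x, (g x : ℂ) * f x ∂μ‖ₑ ≤ (∫⁻ x, ‖g x‖ₑ ∂μ) * ‖f‖ₑ := calc
  _ ≤ ∫⁻ x, ‖g x‖ₑ * ‖f‖ₑ ∂μ := by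
    refine (enorm_integral_le_lintegral_enorm _).trans (lintegral_mono fun x => ?_)
    rw [enorm_mul]
    exact mul_le_mul' (enorm_le_iff_norm_le.2 (Complex.norm_real _).le)
      (enorm_le_iff_norm_le.2 (f.norm_coe_le_norm x))
  _ = (∫⁻ x, ‖g x‖ₑ ∂μ) * ‖f‖ₑ := lintegral_mul_const' _ _ enorm_ne_top

/-- `η ↦ k η` is a uniformly continuous map from `Ω` into the ball of radius `M` of `L¹(ν)`. -/
structure IsL1UniformKernel {Ω : Type*} [UniformSpace Ω] [MeasurableSpace Ω] (ν : Measure Ω)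
    (k : Ω → Ω → ℝ) (M : ℝ≥0) : Prop where
  aestronglyMeasurable : ∀ η, AEStronglyMeasurable (k η) ν
  lintegral_enorm_le : ∀ η, ∫⁻ ξ, ‖k η ξ‖ₑ ∂ν ≤ M
  tendsto_uniformity :
    Tendsto (fun p : Ω × Ω => ∫⁻ ξ, ‖k p.1 ξ - k p.2 ξ‖ₑ ∂ν) (𝓤 Ω) (𝓝 0)

namespace IsL1UniformKernel

variable {Ω : Type*} [MetricSpace Ω] [CompactSpace Ω] [MeasurableSpace Ω]
  {ν : Measure Ω} {k : Ω → Ω → ℝ} {M : ℝ≥0}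

theorem norm_integral_le (hk : IsL1UniformKernel ν k M) (f : C(Ω, ℂ)) (η : Ω) :
    ‖∫ ξ, (k η ξ : ℂ) * f ξ ∂ν‖ ≤ M * ‖f‖ := by
  have h : ‖∫ ξ, (k η ξ : ℂ) * f ξ ∂ν‖ₑ ≤ M * ‖f‖ₑ :=
    (enorm_integral_ofReal_mul_le (k η) f).trans (by gcongr; exact hk.lintegral_enorm_le η)
  rwa [← ofReal_norm, ← ofReal_norm, ← ENNReal.ofReal_coe_nnreal,
    ← ENNReal.ofReal_mul (by positivity), ENNReal.ofReal_le_ofReal_iff (by positivity)] at h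

variable [BorelSpace Ω]

theorem integrable (hk : IsL1UniformKernel ν k M) (f : C(Ω, ℂ)) (η : Ω) :
    Integrable (fun ξ => (k η ξ : ℂ) * f ξ) ν :=
  (Integrable.ofReal ⟨hk.aestronglyMeasurable η,
    (hk.lintegral_enorm_le η).trans_lt ENNReal.coe_lt_top⟩).mul_bdd
    f.continuous.aestronglyMeasurable (ae_of_all _ f.norm_coe_le_norm)

theorem enorm_integral_sub_le (hk : IsL1UniformKernel ν k M) (f : C(Ω, ℂ)) (η η' : Ω) :
    ‖∫ ξ, (k η ξ : ℂ) * f ξ ∂ν - ∫ ξ, (k η' ξ : ℂ) * f ξ ∂ν‖ₑ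
      ≤ (∫⁻ ξ, ‖k η ξ - k η' ξ‖ₑ ∂ν) * ‖f‖ₑ := by
  rw [← integral_sub (hk.integrable f η) (hk.integrable f η')]
  convert enorm_integral_ofReal_mul_le (μ := ν) (fun ξ => k η ξ - k η' ξ) f using 4
  push_cast
  ring

theorem uniformContinuous_integral (hk : IsL1UniformKernel ν k M) (f : C(Ω, ℂ)) :
    UniformContinuous fun η => ∫ ξ, (k η ξ : ℂ) * f ξ ∂ν := by
  refine uniformity_basis_edist.tendsto_right_iff.2 fun ε hε => ?_
  have h : Tendsto (fun p : Ω × Ω => (∫⁻ ξ, ‖k p.1 ξ - k p.2 ξ‖ₑ ∂ν) * ‖f‖ₑ) (𝓤 Ω) (𝓝 0) := by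
    simpa using ENNReal.Tendsto.mul_const hk.tendsto_uniformity (Or.inr enorm_ne_top)
  filter_upwards [h.eventually (gt_mem_nhds hε)] with p hp
  rw [edist_eq_enorm_sub]
  exact (hk.enorm_integral_sub_le f p.1 p.2).trans_lt hp

noncomputable def toCLM (hk : IsL1UniformKernel ν k M) : C(Ω, ℂ) →L[ℂ] C(Ω, ℂ) :=
  LinearMap.mkContinuous
    { toFun f := ⟨fun η => ∫ ξ, (k η ξ : ℂ) * f ξ ∂ν, (hk.uniformContinuous_integral f).continuous⟩
      map_add' f g := by
        ext η
        simp [mul_add, integral_add (hk.integrable f η) (hk.integrable g η)]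
      map_smul' c f := by
        ext η
        simp [mul_left_comm _ c, integral_const_mul] }
    M fun f => (ContinuousMap.norm_le _ (by positivity)).2 (hk.norm_integral_le f)

theorem toCLM_apply (hk : IsL1UniformKernel ν k M) (f : C(Ω, ℂ)) (η : Ω) :
    hk.toCLM f η = ∫ ξ, (k η ξ : ℂ) * f ξ ∂ν :=
  rfl

theorem isCompactOperator_toCLM (hk : IsL1UniformKernel ν k M) : IsCompactOperator hk.toCLM := by
  refine (isCompactOperator_iff_isCompact_closure_image_ball
    (hk.toCLM : C(Ω, ℂ) →ₗ[ℂ] C(Ω, ℂ)) one_pos).2 ?_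
  refine ContinuousMap.isCompact_closure_of_equicontinuous (isCompact_closedBall 0 (M : ℝ)) ?_ ?_
  · rintro _ ⟨f, hf, rfl⟩ η
    rw [mem_closedBall_zero_iff]
    exact (hk.norm_integral_le f η).trans
      (mul_le_of_le_one_right M.2 (mem_ball_zero_iff.1 hf).le)
  · refine UniformEquicontinuous.equicontinuous
      (uniformity_basis_edist.uniformEquicontinuous_iff_right.2 fun ε hε => ?_)
    filter_upwards [hk.tendsto_uniformity.eventually (gt_mem_nhds hε)]
    rintro p hp ⟨_, f, hf, rfl⟩
    rw [edist_eq_enorm_sub]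
    refine (hk.enorm_integral_sub_le f p.1 p.2).trans_lt (lt_of_le_of_lt ?_ hp)
    refine mul_le_of_le_one_right zero_le ?_
    rw [← ofReal_norm]
    exact ENNReal.ofReal_le_one.2 (mem_ball_zero_iff.1 hf).le

end IsL1UniformKernel

theorem isL1UniformKernel_of_continuous {Ω : Type*} [MetricSpace Ω] [CompactSpace Ω]
    [MeasurableSpace Ω] [OpensMeasurableSpace Ω] {ν : Measure Ω} [IsFiniteMeasure ν]
    {k : Ω → Ω → ℝ} (hk : Continuous (Function.uncurry k)) : ∃ M, IsL1UniformKernel ν k M := by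
  let K : C(Ω, C(Ω, ℝ)) := ContinuousMap.curry ⟨_, hk⟩
  obtain ⟨B, hB⟩ := (isCompact_range K.continuous).isBounded.exists_norm_le
  refine ⟨‖B‖₊ * (ν Set.univ).toNNReal, fun η => (K η).continuous.aestronglyMeasurable,
    fun η => ?_, ?_⟩
  · calc ∫⁻ ξ, ‖k η ξ‖ₑ ∂ν ≤ ∫⁻ _, ‖B‖ₑ ∂ν := lintegral_mono fun ξ => enorm_le_iff_norm_le.2
          (((K η).norm_coe_le_norm ξ).trans ((hB _ ⟨η, rfl⟩).trans (le_abs_self B)))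
      _ = ((‖B‖₊ * (ν Set.univ).toNNReal : ℝ≥0) : ℝ≥0∞) := by
          rw [lintegral_const, ENNReal.coe_mul, ENNReal.coe_toNNReal (measure_ne_top _ _)]
          rfl
  · have hK : Tendsto (fun p : Ω × Ω => dist (K p.1) (K p.2)) (𝓤 Ω) (𝓝 0) := by
      refine Metric.tendsto_nhds.2 fun ε hε => ?_
      obtain ⟨δ, hδ, h⟩ := Metric.uniformContinuous_iff.1
        (CompactSpace.uniformContinuous_of_continuous K.continuous) ε hε
      exact Metric.mem_uniformity_dist.2 ⟨δ, hδ, fun _ _ hab => by simpa using h hab⟩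
    have hbound : Tendsto (fun p : Ω × Ω => ENNReal.ofReal (dist (K p.1) (K p.2)) * ν Set.univ)
        (𝓤 Ω) (𝓝 0) := by
      simpa using ENNReal.Tendsto.mul_const (ENNReal.tendsto_ofReal hK)
        (Or.inr (measure_ne_top ν Set.univ))
    refine tendsto_of_tendsto_of_tendsto_of_le_of_le tendsto_const_nhds hbound
      (fun _ => zero_le) fun p => ?_
    calc ∫⁻ ξ, ‖k p.1 ξ - k p.2 ξ‖ₑ ∂ν ≤ ∫⁻ _, ENNReal.ofReal (dist (K p.1) (K p.2)) ∂ν :=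
          lintegral_mono fun ξ => by
            rw [← ofReal_norm, ← dist_eq_norm]
            exact ENNReal.ofReal_le_ofReal
              (ContinuousMap.dist_apply_le_dist (f := K p.1) (g := K p.2) ξ)
      _ = ENNReal.ofReal (dist (K p.1) (K p.2)) * ν Set.univ := lintegral_const _

theorem abs_rpow_sub_rpow_le {e r a b : ℝ} (he : e ≤ 1) (hr : 0 < r) (ha : r ≤ a) (hb : r ≤ b) :
    |a ^ e - b ^ e| ≤ |e| * r ^ (e - 1) * |a - b| := by
  have hderiv : ∀ x ∈ Set.Ici r, HasDerivWithinAt (· ^ e) (e * x ^ (e - 1)) (Set.Ici r) x :=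
    fun x hx => (Real.hasDerivAt_rpow_const (Or.inl (hr.trans_le hx).ne')).hasDerivWithinAt
  have hbound : ∀ x ∈ Set.Ici r, ‖e * x ^ (e - 1)‖ ≤ |e| * r ^ (e - 1) := fun x hx => by
    rw [norm_mul, Real.norm_eq_abs, Real.norm_of_nonneg (Real.rpow_nonneg (hr.le.trans hx) _)]
    exact mul_le_mul_of_nonneg_left (Real.rpow_le_rpow_of_nonpos hr hx (by linarith)) (abs_nonneg e)
  simpa [Real.norm_eq_abs] using
    (convex_Ici r).norm_image_sub_le_of_norm_hasDerivWithin_le hderiv hbound hb ha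

theorem ball_subset_union_dyadic_annuli {Ω : Type*} [MetricSpace Ω] (η : Ω) (ε : ℝ) :
    ball η ε ⊆ {η} ∪ ⋃ n : ℕ, closedBall η (ε / 2 ^ n) \ closedBall η (ε / 2 ^ n / 2) := by
  intro ξ hξ
  rcases eq_or_ne ξ η with rfl | hne
  · exact Or.inl rfl
  have hd : 0 < dist ξ η := dist_pos.2 hne
  obtain ⟨n, hn, hn'⟩ := exists_nat_pow_near ((one_le_div hd).2 (mem_ball.1 hξ).le) one_lt_two
  refine Or.inr (Set.mem_iUnion.2 ⟨n, ?_, ?_⟩)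
  · rw [mem_closedBall, le_div_iff₀ (by positivity), mul_comm]
    exact (le_div_iff₀ hd).1 hn
  · rw [mem_closedBall, not_le, div_div, ← pow_succ, div_lt_iff₀ (by positivity), mul_comm]
    exact (div_lt_iff₀ hd).1 hn'

section AhlforsRegular

variable {Ω : Type*} [MetricSpace Ω] [MeasurableSpace Ω] {ν : Measure Ω} {D C : ℝ}

theorem exists_measure_ball_le_mul_rpow [IsProbabilityMeasure ν] (hD : 0 ≤ D)
    (hdiam : 0 < diam (Set.univ : Set Ω))
    (h : ∀ ξ : Ω, ∀ r : ℝ, 0 < r → r ≤ diam (Set.univ : Set Ω) →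
      ν (ball ξ r) ≤ ENNReal.ofReal (C * r ^ D)) :
    ∃ C' > 0, ∀ ξ : Ω, ∀ r : ℝ, 0 < r → ν (ball ξ r) ≤ ENNReal.ofReal (C' * r ^ D) := by
  set d := diam (Set.univ : Set Ω)
  have hdD : 0 < d ^ D := Real.rpow_pos_of_pos hdiam D
  refine ⟨max C (d ^ D)⁻¹, lt_max_of_lt_right (inv_pos.2 hdD), fun ξ r hr => ?_⟩
  rcases le_or_gt r d with hrd | hrd
  · exact (h ξ r hr hrd).trans (ENNReal.ofReal_le_ofReal (by gcongr; exact le_max_left _ _))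
  · -- beyond the diameter the ball is everything, of measure `1 ≤ (r / d) ^ D`
    refine prob_le_one.trans (ENNReal.one_le_ofReal.2 ?_)
    calc 1 = (d ^ D)⁻¹ * d ^ D := (inv_mul_cancel₀ hdD.ne').symm
      _ ≤ max C (d ^ D)⁻¹ * r ^ D := by gcongr; exact le_max_right _ _

theorem setLIntegral_dist_rpow_annulus_le
    (hC : ∀ ξ : Ω, ∀ r : ℝ, 0 < r → ν (ball ξ r) ≤ ENNReal.ofReal (C * r ^ D))
    {e s : ℝ} (he : e ≤ 0) (hs : 0 < s) (η : Ω) :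
    ∫⁻ ξ in closedBall η s \ closedBall η (s / 2), ENNReal.ofReal (dist ξ η ^ e) ∂ν
      ≤ ENNReal.ofReal (C * 2 ^ (D - e) * s ^ (D + e)) := calc
  _ ≤ ∫⁻ _ in closedBall η s \ closedBall η (s / 2), ENNReal.ofReal ((s / 2) ^ e) ∂ν := by
    refine setLIntegral_mono measurable_const fun ξ hξ => ENNReal.ofReal_le_ofReal ?_
    have hξ : s / 2 < dist ξ η := not_le.1 hξ.2
    exact Real.rpow_le_rpow_of_nonpos (by positivity) hξ.le he
  _ ≤ ENNReal.ofReal ((s / 2) ^ e) * ENNReal.ofReal (C * (2 * s) ^ D) := by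
    rw [setLIntegral_const]
    gcongr
    refine (measure_mono fun ξ hξ => ?_).trans (hC η (2 * s) (by positivity))
    exact mem_ball.2 ((mem_closedBall.1 hξ.1).trans_lt (by linarith))
  _ = ENNReal.ofReal (C * 2 ^ (D - e) * s ^ (D + e)) := by
    rw [← ENNReal.ofReal_mul (by positivity), Real.div_rpow hs.le zero_le_two,
      Real.mul_rpow zero_le_two hs.le, Real.rpow_sub two_pos, Real.rpow_add hs]
    congr 1
    field_simp

theorem exists_setLIntegral_ball_dist_rpow_le (hC0 : 0 ≤ C)
    (hC : ∀ ξ : Ω, ∀ r : ℝ, 0 < r → ν (ball ξ r) ≤ ENNReal.ofReal (C * r ^ D))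
    {e : ℝ} (he : -D < e) (he0 : e < 0) :
    ∃ K : ℝ, ∀ η : Ω, ∀ ε : ℝ, 0 < ε →
      ∫⁻ ξ in ball η ε, ENNReal.ofReal (dist ξ η ^ e) ∂ν ≤ ENNReal.ofReal (K * ε ^ (D + e)) := by
  have hp : 0 < D + e := by linarith
  set q : ℝ := (2 ^ (D + e))⁻¹
  have hq : q < 1 := inv_lt_one_of_one_lt₀ (Real.one_lt_rpow one_lt_two hp)
  refine ⟨C * 2 ^ (D - e) * (1 - q)⁻¹, fun η ε hε => ?_⟩
  have hterm : ∀ n : ℕ, ENNReal.ofReal (C * 2 ^ (D - e) * (ε / 2 ^ n) ^ (D + e))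
      = ENNReal.ofReal (C * 2 ^ (D - e) * ε ^ (D + e)) * ENNReal.ofReal q ^ n := fun n => by
    rw [← ENNReal.ofReal_pow (by positivity), ← ENNReal.ofReal_mul (by positivity),
      Real.div_rpow hε.le (by positivity), ← Real.rpow_pow_comm zero_le_two, inv_pow, mul_assoc,
      div_eq_mul_inv]
    ring_nf
  calc ∫⁻ ξ in ball η ε, ENNReal.ofReal (dist ξ η ^ e) ∂ν
      ≤ (∫⁻ ξ in {η}, ENNReal.ofReal (dist ξ η ^ e) ∂ν) + ∑' n : ℕ,
          ∫⁻ ξ in closedBall η (ε / 2 ^ n) \ closedBall η (ε / 2 ^ n / 2),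
            ENNReal.ofReal (dist ξ η ^ e) ∂ν :=
        (lintegral_mono_set (ball_subset_union_dyadic_annuli η ε)).trans
          ((lintegral_union_le _ _ _).trans (by gcongr; exact lintegral_iUnion_le _ _))
    _ ≤ 0 + ∑' n : ℕ, ENNReal.ofReal (C * 2 ^ (D - e) * (ε / 2 ^ n) ^ (D + e)) := by
        -- the kernel vanishes on the diagonal, since `0 ^ e = 0` for `e ≠ 0`
        gcongr with n
        · refine (setLIntegral_mono measurable_const fun ξ (hξ : ξ = η) => ?_).trans_eq
            (lintegral_zero (μ := ν.restrict {η}))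
          rw [hξ, dist_self, Real.zero_rpow he0.ne, ENNReal.ofReal_zero]
        · exact setLIntegral_dist_rpow_annulus_le hC he0.le (by positivity) η
    _ = ENNReal.ofReal (C * 2 ^ (D - e) * (1 - q)⁻¹ * ε ^ (D + e)) := by
        rw [zero_add, tsum_congr hterm, ENNReal.tsum_mul_left, ENNReal.tsum_geometric,
          ← ENNReal.ofReal_one, ← ENNReal.ofReal_sub _ (by positivity),
          ← ENNReal.ofReal_inv_of_pos (by linarith), ← ENNReal.ofReal_mul (by positivity)]
        ring_nf

end AhlforsRegular

section SingularKernel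

variable {Ω : Type*} [MetricSpace Ω] [MeasurableSpace Ω] {ν : Measure Ω} {e p K r : ℝ}
  {η η' : Ω}

theorem setLIntegral_compl_ball_enorm_dist_rpow_sub_le (he : e ≤ 1) (hr : 0 < r)
    (hηη' : dist η η' < r) :
    ∫⁻ ξ in (ball η (2 * r))ᶜ, ‖dist ξ η ^ e - dist ξ η' ^ e‖ₑ ∂ν
      ≤ ENNReal.ofReal (|e| * r ^ (e - 1) * dist η η') * ν Set.univ := calc
  _ ≤ ∫⁻ _ in (ball η (2 * r))ᶜ, ENNReal.ofReal (|e| * r ^ (e - 1) * dist η η') ∂ν := by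
    refine setLIntegral_mono measurable_const fun ξ hξ => ?_
    have hξη : 2 * r ≤ dist ξ η := not_lt.1 hξ
    have hξη' : r ≤ dist ξ η' := by linarith [dist_triangle ξ η' η, dist_comm η η']
    rw [Real.enorm_eq_ofReal_abs]
    refine ENNReal.ofReal_le_ofReal ((abs_rpow_sub_rpow_le he hr (by linarith) hξη').trans ?_)
    rw [dist_comm ξ η, dist_comm ξ η']
    gcongr
    exact abs_dist_sub_le η η' ξ
  _ ≤ ENNReal.ofReal (|e| * r ^ (e - 1) * dist η η') * ν Set.univ := by
    rw [setLIntegral_const]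
    gcongr
    exact Set.subset_univ _

variable [OpensMeasurableSpace Ω]

theorem setLIntegral_ball_enorm_dist_rpow_sub_le
    (hK : ∀ η : Ω, ∀ ε : ℝ, 0 < ε →
      ∫⁻ ξ in ball η ε, ENNReal.ofReal (dist ξ η ^ e) ∂ν ≤ ENNReal.ofReal (K * ε ^ p))
    (hr : 0 < r) (hηη' : dist η η' < r) :
    ∫⁻ ξ in ball η (2 * r), ‖dist ξ η ^ e - dist ξ η' ^ e‖ₑ ∂ν
      ≤ ENNReal.ofReal (K * (2 * r) ^ p) + ENNReal.ofReal (K * (3 * r) ^ p) := calc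
  _ ≤ ∫⁻ ξ in ball η (2 * r), ENNReal.ofReal (dist ξ η ^ e) + ENNReal.ofReal (dist ξ η' ^ e) ∂ν :=
    lintegral_mono fun ξ => enorm_sub_le.trans_eq <| by
      rw [Real.enorm_of_nonneg (by positivity), Real.enorm_of_nonneg (by positivity)]
  _ = (∫⁻ ξ in ball η (2 * r), ENNReal.ofReal (dist ξ η ^ e) ∂ν)
      + ∫⁻ ξ in ball η (2 * r), ENNReal.ofReal (dist ξ η' ^ e) ∂ν :=
    lintegral_add_left
      ((continuous_id.dist continuous_const).measurable.pow_const e).ennreal_ofReal _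
  _ ≤ ENNReal.ofReal (K * (2 * r) ^ p) + ENNReal.ofReal (K * (3 * r) ^ p) := by
    gcongr
    · exact hK η _ (by positivity)
    · refine (lintegral_mono_set fun ξ hξ => ?_).trans (hK η' (3 * r) (by positivity))
      exact mem_ball.2 (by linarith [mem_ball.1 hξ, dist_triangle ξ η η'])

theorem lintegral_enorm_dist_rpow_sub_le
    (hK : ∀ η : Ω, ∀ ε : ℝ, 0 < ε →
      ∫⁻ ξ in ball η ε, ENNReal.ofReal (dist ξ η ^ e) ∂ν ≤ ENNReal.ofReal (K * ε ^ p))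
    (he : e ≤ 1) (hr : 0 < r) (hηη' : dist η η' < r) :
    ∫⁻ ξ, ‖dist ξ η ^ e - dist ξ η' ^ e‖ₑ ∂ν
      ≤ ENNReal.ofReal (K * (2 * r) ^ p) + ENNReal.ofReal (K * (3 * r) ^ p)
        + ENNReal.ofReal (|e| * r ^ (e - 1) * dist η η') * ν Set.univ := by
  rw [← lintegral_add_compl _ (measurableSet_ball (x := η) (ε := 2 * r))]
  exact add_le_add (setLIntegral_ball_enorm_dist_rpow_sub_le hK hr hηη')
    (setLIntegral_compl_ball_enorm_dist_rpow_sub_le he hr hηη')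

theorem isL1UniformKernel_dist_rpow [CompactSpace Ω] [IsFiniteMeasure ν]
    (hK : ∀ η : Ω, ∀ ε : ℝ, 0 < ε →
      ∫⁻ ξ in ball η ε, ENNReal.ofReal (dist ξ η ^ e) ∂ν ≤ ENNReal.ofReal (K * ε ^ p))
    (he : e ≤ 1) (hp : 0 < p) :
    ∃ M, IsL1UniformKernel ν (fun η ξ => dist ξ η ^ e) M := by
  set R := diam (Set.univ : Set Ω) + 1
  have hball : ∀ η : Ω, ball η R = Set.univ := fun η => Set.eq_univ_of_forall fun ξ =>
    mem_ball.2 ((dist_le_diam_of_mem isCompact_univ.isBounded trivial trivial).trans_lt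
      (lt_add_one _))
  refine ⟨(K * R ^ p).toNNReal, fun η =>
    ((continuous_id.dist continuous_const).measurable.pow_const e).aestronglyMeasurable,
    fun η => ?_, ENNReal.tendsto_nhds_zero.2 fun ε hε => ?_⟩
  · calc ∫⁻ ξ, ‖dist ξ η ^ e‖ₑ ∂ν = ∫⁻ ξ in ball η R, ENNReal.ofReal (dist ξ η ^ e) ∂ν := by
          rw [hball, Measure.restrict_univ]
          exact lintegral_congr fun ξ => Real.enorm_of_nonneg (by positivity)
      _ ≤ ENNReal.ofReal (K * R ^ p) := hK η R (by positivity)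
  · have hnear : Tendsto
        (fun r => ENNReal.ofReal (K * (2 * r) ^ p) + ENNReal.ofReal (K * (3 * r) ^ p))
        (𝓝[>] 0) (𝓝 0) := by
      have hc : ∀ c : ℝ, Continuous fun r : ℝ => ENNReal.ofReal (K * (c * r) ^ p) := fun c =>
        ENNReal.continuous_ofReal.comp (continuous_const.mul
          ((continuous_const.mul continuous_id).rpow_const fun _ => Or.inr hp.le))
      simpa [Pi.add_def, Real.zero_rpow hp.ne'] using
        (((hc 2).add (hc 3)).tendsto 0).mono_left nhdsWithin_le_nhds
    obtain ⟨r, hr_near, hr⟩ :=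
      ((hnear.eventually (gt_mem_nhds (ENNReal.half_pos hε.ne'))).and self_mem_nhdsWithin).exists
    have hfar : Tendsto (fun d => ENNReal.ofReal (|e| * r ^ (e - 1) * d) * ν Set.univ)
        (𝓝 0) (𝓝 0) := by
      simpa using ENNReal.Tendsto.mul_const (ENNReal.tendsto_ofReal
        ((continuous_const.mul continuous_id).tendsto 0)) (Or.inr (measure_ne_top ν _))
    obtain ⟨δ, hδ, hδ_far⟩ :=
      Metric.eventually_nhds_iff.1 (hfar.eventually (gt_mem_nhds (ENNReal.half_pos hε.ne')))
    refine Metric.mem_uniformity_dist.2 ⟨min δ r, lt_min hδ hr, fun η η' hηη' => ?_⟩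
    calc _ ≤ _ := lintegral_enorm_dist_rpow_sub_le hK he hr (hηη'.trans_le (min_le_right _ _))
      _ ≤ ε / 2 + ε / 2 := by
        refine add_le_add hr_near.le (hδ_far ?_).le
        rw [Real.dist_0_eq_abs, abs_of_nonneg dist_nonneg]
        exact hηη'.trans_le (min_le_left _ _)
      _ = ε := ENNReal.add_halves ε

end SingularKernel

theorem knappStein_compact_continuousMap_general
    {Ω : Type*} [MetricSpace Ω] [CompactSpace Ω] [MeasurableSpace Ω] [BorelSpace Ω]
    (ν : Measure Ω) [IsProbabilityMeasure ν]
    (D : ℝ) (hD : 0 < D)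
    (Cν : ℝ)
    (hAR : ∀ ξ : Ω, ∀ r : ℝ, 0 < r → r ≤ Metric.diam (Set.univ : Set Ω) →
      ENNReal.ofReal (Cν⁻¹ * r ^ D) ≤ ν (Metric.ball ξ r) ∧
        ν (Metric.ball ξ r) ≤ ENNReal.ofReal (Cν * r ^ D)) :
    ∀ t : ℝ, 0 < t →
      (∀ f : C(Ω, ℂ), Continuous fun η : Ω =>
        ∫ ξ, ((dist ξ η ^ (-(1 - 2*t) * D) : ℝ) : ℂ) * f ξ ∂ν) ∧
      ∃ T : C(Ω, ℂ) →L[ℂ] C(Ω, ℂ),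
        (∀ f : C(Ω, ℂ), ∀ η : Ω,
          T f η = ∫ ξ, ((dist ξ η ^ (-(1 - 2*t) * D) : ℝ) : ℂ) * f ξ ∂ν) ∧
        IsCompactOperator (⇑T) := by
  intro t ht
  set e := -(1 - 2 * t) * D
  have he : -D < e := by nlinarith [mul_pos ht hD]
  obtain ⟨M, hk⟩ : ∃ M, IsL1UniformKernel ν (fun η ξ => dist ξ η ^ e) M := by
    rcases le_or_gt 0 e with he₀ | he₀
    · exact isL1UniformKernel_of_continuous
        ((continuous_snd.dist continuous_fst).rpow_const fun _ => Or.inr he₀)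
    rcases subsingleton_or_nontrivial Ω with hΩ | hΩ
    · exact isL1UniformKernel_of_continuous continuous_of_discreteTopology
    obtain ⟨C, hC, hball⟩ := exists_measure_ball_le_mul_rpow hD.le
      (diam_pos Set.nontrivial_univ isCompact_univ.isBounded) fun ξ r hr hrd => (hAR ξ r hr hrd).2
    obtain ⟨K, hK⟩ := exists_setLIntegral_ball_dist_rpow_le hC.le hball he he₀
    exact isL1UniformKernel_dist_rpow hK (by linarith) (by linarith)
  exact ⟨fun f => (hk.uniformContinuous_integral f).continuous, hk.toCLM, hk.toCLM_apply,
    hk.isCompactOperator_toCLM⟩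

/-- For `t > 0`: (i) the Knapp–Stein operator maps continuous functions to continuous
functions, and (ii) the resulting operator on `C(Ω,ℂ)` (sup norm) is a compact operator. -/
theorem knappStein_compact_continuousMap
    {Ω : Type*} [MetricSpace Ω] [CompactSpace Ω] [MeasurableSpace Ω] [BorelSpace Ω]
    (ν : Measure Ω) [IsProbabilityMeasure ν]
    (D : ℝ) (hD : 0 < D)
    (hdiam : Metric.diam (Set.univ : Set Ω) ≤ 1)
    (Cν : ℝ) (hCν : 1 ≤ Cν)
    (hAR : ∀ ξ : Ω, ∀ r : ℝ, 0 < r → r ≤ Metric.diam (Set.univ : Set Ω) →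
      ENNReal.ofReal (Cν⁻¹ * r ^ D) ≤ ν (Metric.ball ξ r) ∧
        ν (Metric.ball ξ r) ≤ ENNReal.ofReal (Cν * r ^ D)) :
    ∀ t : ℝ, 0 < t →
      (∀ f : C(Ω, ℂ), Continuous fun η : Ω =>
        ∫ ξ, ((dist ξ η ^ (-(1 - 2*t) * D) : ℝ) : ℂ) * f ξ ∂ν) ∧
      ∃ T : C(Ω, ℂ) →L[ℂ] C(Ω, ℂ),
        (∀ f : C(Ω, ℂ), ∀ η : Ω,
          T f η = ∫ ξ, ((dist ξ η ^ (-(1 - 2*t) * D) : ℝ) : ℂ) * f ξ ∂ν) ∧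
        IsCompactOperator (⇑T) :=
  knappStein_compact_continuousMap_general ν D hD Cν hAR
end

section
/- Let t > 0. For every v ∈ L²(Ω, ν) and every F ∈ L²(Ω × Ω, ν ⊗ ν), the function G(ξ) = ∫_Ω (F(ξ, η) − F(η, ξ)) · d(ξ, η)^{-(1/2−t)D} dν(η) is defined ν-a.e., belongs to L²(Ω, ν), and one has the adjoint identity ∫_Ω ∫_Ω (v(ξ) − v(η)) · conj(F(ξ, η)) · d(ξ, η)^{-(1/2−t)D} dν(ξ) dν(η) = ∫_Ω v(ξ) · conj(G(ξ)) dν(ξ). -/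
open MeasureTheory Metric
open scoped ENNReal ComplexConjugate

/-!
Write `k(ξ, η) = d(ξ, η)^{-(1/2-t)D}`. Its square is `d(ξ, η)^γ` with `γ = (2t-1)D > -D`;
splitting `Ω` into dyadic shells around `ξ` and bounding the measure of each ball by Ahlfors
regularity turns `∫ d(ξ, η)^γ dν(η)` into a convergent geometric series, uniformly in `ξ`.
A kernel whose rows are uniformly bounded in `L²` defines, by Cauchy–Schwarz on each row, a bounded
operator `F ↦ ∫ F(·, η) k(·, η) dν(η)` from `L²(ν ⊗ ν)` to `L²(ν)`, and Fubini identifies it with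
the adjoint of `v ↦ v(ξ) k(ξ, η)`. Since `k` is symmetric and `ν ⊗ ν` is invariant under the swap,
the term `v(η) k(ξ, η)` of `δ_t v` pairs with `F` as `v(ξ) k(ξ, η)` pairs with `F ∘ swap`.
-/

namespace MeasureTheory

section SquareIntegrable

variable {α E 𝕜 : Type*} [MeasurableSpace α] {μ : Measure α} [NormedAddCommGroup E] [RCLike 𝕜]

lemma eLpNorm_two_sq (f : α → E) : eLpNorm f 2 μ ^ 2 = ∫⁻ x, ‖f x‖ₑ ^ 2 ∂μ := by
  simpa using eLpNorm_nnreal_pow_eq_lintegral (f := f) (μ := μ) (p := 2) two_ne_zero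

lemma memLp_two_of_lintegral_enorm_sq_ne_top {f : α → E} (hf : AEStronglyMeasurable f μ)
    (h : ∫⁻ x, ‖f x‖ₑ ^ 2 ∂μ ≠ ∞) : MemLp f 2 μ :=
  ⟨hf, by simpa [← eLpNorm_two_sq, lt_top_iff_ne_top] using h⟩

lemma enorm_integral_mul_le {f g : α → 𝕜} (hf : AEStronglyMeasurable f μ)
    (hg : AEStronglyMeasurable g μ) :
    ‖∫ x, f x * g x ∂μ‖ₑ ≤ eLpNorm f 2 μ * eLpNorm g 2 μ :=
  calc ‖∫ x, f x * g x ∂μ‖ₑ ≤ eLpNorm (f • g) 1 μ := by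
        rw [eLpNorm_one_eq_lintegral_enorm]; exact enorm_integral_le_lintegral_enorm _
    _ ≤ eLpNorm f 2 μ * eLpNorm g 2 μ := eLpNorm_smul_le_mul_eLpNorm hg hf

end SquareIntegrable

section KernelOperator

variable {α β E 𝕜 : Type*} [MeasurableSpace α] [MeasurableSpace β] [NormedAddCommGroup E]
  [RCLike 𝕜] {μ : Measure α} {ν : Measure β} [SFinite ν]

lemma MemLp.ae_memLp_two_prodMk_left [SFinite μ] {F : α × β → E} (hF : MemLp F 2 (μ.prod ν)) :
    ∀ᵐ x ∂μ, MemLp (fun y => F (x, y)) 2 ν := by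
  filter_upwards [((memLp_two_iff_integrable_sq_norm hF.1).1 hF).prod_right_ae,
    hF.1.prodMk_left] with x hx hmeas
  exact (memLp_two_iff_integrable_sq_norm hmeas).2 hx

variable {k : α × β → 𝕜} {M : ℝ≥0∞}

lemma ae_integrable_mul_kernel [SFinite μ] (hk : AEStronglyMeasurable k (μ.prod ν))
    (hkrow : ∀ x, ∫⁻ y, ‖k (x, y)‖ₑ ^ 2 ∂ν ≤ M) (hM : M ≠ ∞) {F : α × β → 𝕜}
    (hF : MemLp F 2 (μ.prod ν)) :
    ∀ᵐ x ∂μ, Integrable (fun y => F (x, y) * k (x, y)) ν := by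
  filter_upwards [hF.ae_memLp_two_prodMk_left, hk.prodMk_left] with x hFx hkx
  have hkx2 : MemLp (fun y => k (x, y)) 2 ν :=
    memLp_two_of_lintegral_enorm_sq_ne_top hkx (ne_top_of_le_ne_top hM (hkrow x))
  exact hFx.integrable_mul hkx2

lemma eLpNorm_integral_mul_kernel_sq_le (hk : AEStronglyMeasurable k (μ.prod ν))
    (hkrow : ∀ x, ∫⁻ y, ‖k (x, y)‖ₑ ^ 2 ∂ν ≤ M) {F : α × β → 𝕜}
    (hF : AEStronglyMeasurable F (μ.prod ν)) :
    eLpNorm (fun x => ∫ y, F (x, y) * k (x, y) ∂ν) 2 μ ^ 2 ≤ M * eLpNorm F 2 (μ.prod ν) ^ 2 := by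
  have hF2 : AEMeasurable (fun p => ‖F p‖ₑ ^ 2) (μ.prod ν) := hF.enorm.pow_const 2
  calc eLpNorm (fun x => ∫ y, F (x, y) * k (x, y) ∂ν) 2 μ ^ 2
      = ∫⁻ x, ‖∫ y, F (x, y) * k (x, y) ∂ν‖ₑ ^ 2 ∂μ := eLpNorm_two_sq _
    _ ≤ ∫⁻ x, M * ∫⁻ y, ‖F (x, y)‖ₑ ^ 2 ∂ν ∂μ := by
        refine lintegral_mono_ae ?_
        filter_upwards [hF.prodMk_left, hk.prodMk_left] with x hFx hkx
        calc ‖∫ y, F (x, y) * k (x, y) ∂ν‖ₑ ^ 2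
            ≤ (eLpNorm (fun y => F (x, y)) 2 ν * eLpNorm (fun y => k (x, y)) 2 ν) ^ 2 := by
              gcongr; exact enorm_integral_mul_le hFx hkx
          _ ≤ M * ∫⁻ y, ‖F (x, y)‖ₑ ^ 2 ∂ν := by
              rw [mul_pow, mul_comm, eLpNorm_two_sq, eLpNorm_two_sq]
              gcongr
              exact hkrow x
    _ = M * eLpNorm F 2 (μ.prod ν) ^ 2 := by
        rw [lintegral_const_mul'' _ hF2.lintegral_prod_right', eLpNorm_two_sq,
          lintegral_prod _ hF2]

lemma memLp_integral_mul_kernel (hk : AEStronglyMeasurable k (μ.prod ν))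
    (hkrow : ∀ x, ∫⁻ y, ‖k (x, y)‖ₑ ^ 2 ∂ν ≤ M) (hM : M ≠ ∞) {F : α × β → 𝕜}
    (hF : MemLp F 2 (μ.prod ν)) :
    MemLp (fun x => ∫ y, F (x, y) * k (x, y) ∂ν) 2 μ := by
  refine ⟨(hF.1.mul hk).integral_prod_right', ?_⟩
  have := (eLpNorm_integral_mul_kernel_sq_le hk hkrow hF.1).trans_lt
    (ENNReal.mul_lt_top hM.lt_top (ENNReal.pow_lt_top hF.2))
  simpa using this

lemma eLpNorm_fst_mul_kernel_sq_le (hk : AEStronglyMeasurable k (μ.prod ν))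
    (hkrow : ∀ x, ∫⁻ y, ‖k (x, y)‖ₑ ^ 2 ∂ν ≤ M) {v : α → 𝕜} (hv : AEStronglyMeasurable v μ) :
    eLpNorm (fun p => v p.1 * k p) 2 (μ.prod ν) ^ 2 ≤ M * eLpNorm v 2 μ ^ 2 := by
  have hvk : AEStronglyMeasurable (fun p : α × β => v p.1 * k p) (μ.prod ν) :=
    (hv.comp_fst (ν := ν)).mul hk
  calc eLpNorm (fun p => v p.1 * k p) 2 (μ.prod ν) ^ 2
      = ∫⁻ x, ‖v x‖ₑ ^ 2 * ∫⁻ y, ‖k (x, y)‖ₑ ^ 2 ∂ν ∂μ := by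
        rw [eLpNorm_two_sq, lintegral_prod _ (hvk.enorm.pow_const 2)]
        simp only [enorm_mul, mul_pow]
        exact lintegral_congr fun x => lintegral_const_mul' _ _ (by finiteness)
    _ ≤ ∫⁻ x, ‖v x‖ₑ ^ 2 * M ∂μ := by gcongr with x; exact hkrow x
    _ = M * eLpNorm v 2 μ ^ 2 := by
        rw [lintegral_mul_const'' _ (hv.enorm.pow_const 2), eLpNorm_two_sq, mul_comm]

lemma memLp_fst_mul_kernel (hk : AEStronglyMeasurable k (μ.prod ν))
    (hkrow : ∀ x, ∫⁻ y, ‖k (x, y)‖ₑ ^ 2 ∂ν ≤ M) (hM : M ≠ ∞) {v : α → 𝕜} (hv : MemLp v 2 μ) :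
    MemLp (fun p => v p.1 * k p) 2 (μ.prod ν) := by
  refine ⟨(hv.1.comp_fst (ν := ν)).mul hk, ?_⟩
  have := (eLpNorm_fst_mul_kernel_sq_le hk hkrow hv.1).trans_lt
    (ENNReal.mul_lt_top hM.lt_top (ENNReal.pow_lt_top hv.2))
  simpa using this

lemma integrable_fst_mul_conj_mul_kernel (hk : AEStronglyMeasurable k (μ.prod ν))
    (hkrow : ∀ x, ∫⁻ y, ‖k (x, y)‖ₑ ^ 2 ∂ν ≤ M) (hM : M ≠ ∞) {v : α → 𝕜} (hv : MemLp v 2 μ)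
    {F : α × β → 𝕜} (hF : MemLp F 2 (μ.prod ν)) :
    Integrable (fun p => v p.1 * conj (F p * k p)) (μ.prod ν) := by
  refine ((memLp_fst_mul_kernel hk hkrow hM hv).integrable_mul hF).mono ?_
    (.of_forall fun p => ?_)
  · exact (hv.1.comp_fst (ν := ν)).mul (hF.1.mul hk).star
  · simp only [Pi.mul_apply, norm_mul, RCLike.norm_conj]
    exact le_of_eq (by ring)

lemma integral_fst_mul_conj_mul_kernel [SFinite μ] (hk : AEStronglyMeasurable k (μ.prod ν))
    (hkrow : ∀ x, ∫⁻ y, ‖k (x, y)‖ₑ ^ 2 ∂ν ≤ M) (hM : M ≠ ∞) {v : α → 𝕜} (hv : MemLp v 2 μ)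
    {F : α × β → 𝕜} (hF : MemLp F 2 (μ.prod ν)) :
    ∫ p, v p.1 * conj (F p * k p) ∂(μ.prod ν) =
      ∫ x, v x * conj (∫ y, F (x, y) * k (x, y) ∂ν) ∂μ := by
  rw [integral_prod _ (integrable_fst_mul_conj_mul_kernel hk hkrow hM hv hF)]
  refine integral_congr_ae (.of_forall fun x => ?_)
  simp only [integral_const_mul, integral_conj]

end KernelOperator

section SymmetricKernel

variable {α 𝕜 : Type*} [MeasurableSpace α] [RCLike 𝕜] {μ : Measure α} [SFinite μ]
  {k : α × α → ℝ} {M : ℝ≥0∞}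

theorem derivation_adjoint_of_symmetric_kernel (hk : AEStronglyMeasurable k (μ.prod μ))
    (hk_symm : ∀ x y, k (x, y) = k (y, x)) (hkrow : ∀ x, ∫⁻ y, ‖k (x, y)‖ₑ ^ 2 ∂μ ≤ M)
    (hM : M ≠ ∞) {v : α → 𝕜} (hv : MemLp v 2 μ) {F : α × α → 𝕜} (hF : MemLp F 2 (μ.prod μ)) :
    (∀ᵐ x ∂μ, Integrable (fun y => (F (x, y) - F (y, x)) * (k (x, y) : 𝕜)) μ) ∧
    MemLp (fun x => ∫ y, (F (x, y) - F (y, x)) * (k (x, y) : 𝕜) ∂μ) 2 μ ∧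
    ∫ p, (v p.1 - v p.2) * conj (F p) * (k p : 𝕜) ∂(μ.prod μ) =
      ∫ x, v x * conj (∫ y, (F (x, y) - F (y, x)) * (k (x, y) : 𝕜) ∂μ) ∂μ := by
  set K : α × α → 𝕜 := fun p => (k p : 𝕜)
  have hK : AEStronglyMeasurable K (μ.prod μ) :=
    RCLike.continuous_ofReal.comp_aestronglyMeasurable hk
  have hKrow : ∀ x, ∫⁻ y, ‖K (x, y)‖ₑ ^ 2 ∂μ ≤ M := by
    simpa [K, enorm_eq_nnnorm] using hkrow
  have hFswap : MemLp (fun p => F p.swap) 2 (μ.prod μ) :=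
    hF.comp_measurePreserving Measure.measurePreserving_swap
  have hF' : MemLp (fun p => F p - F p.swap) 2 (μ.prod μ) := hF.sub hFswap
  refine ⟨?_, ?_, ?_⟩
  · exact (ae_integrable_mul_kernel hK hKrow hM hF' :)
  · exact (memLp_integral_mul_kernel hK hKrow hM hF' :)
  have hK_swap : ∀ p, K p.swap = K p := fun p =>
    congrArg (fun r : ℝ => (r : 𝕜)) (hk_symm p.2 p.1)
  set g : α × α → 𝕜 := fun p => v p.1 * conj (F p * K p)
  set h : α × α → 𝕜 := fun p => v p.1 * conj (F p.swap * K p)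
  have hg : Integrable g (μ.prod μ) := integrable_fst_mul_conj_mul_kernel hK hKrow hM hv hF
  have hh : Integrable h (μ.prod μ) := integrable_fst_mul_conj_mul_kernel hK hKrow hM hv hFswap
  calc ∫ p, (v p.1 - v p.2) * conj (F p) * K p ∂(μ.prod μ)
      = ∫ p, g p - h p.swap ∂(μ.prod μ) := by
        refine integral_congr_ae (.of_forall fun p => ?_)
        simp only [g, h, Prod.fst_swap, Prod.swap_swap, hK_swap, map_mul, K, RCLike.conj_ofReal]
        ring
    _ = ∫ p, g p - h p ∂(μ.prod μ) := by
        have hh_swap : Integrable (fun p => h p.swap) (μ.prod μ) := hh.swap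
        rw [integral_sub hg hh_swap, integral_sub hg hh, integral_prod_swap]
    _ = ∫ p, v p.1 * conj ((F p - F p.swap) * K p) ∂(μ.prod μ) := by
        refine integral_congr_ae (.of_forall fun p => ?_)
        simp only [g, h, sub_mul, map_sub, mul_sub]
    _ = ∫ x, v x * conj (∫ y, (F (x, y) - F (y, x)) * K (x, y) ∂μ) ∂μ :=
        integral_fst_mul_conj_mul_kernel hK hKrow hM hv hF'

end SymmetricKernel

end MeasureTheory

section DyadicKernelEstimate

open Set

lemma exists_le_half_pow_and_rpow_le {d γ : ℝ} (hd0 : 0 ≤ d) (hd1 : d ≤ 1) (hγ : γ ≤ 0) :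
    ∃ n : ℕ, d ≤ (1 / 2 : ℝ) ^ n ∧ d ^ γ ≤ ((1 / 2 : ℝ) ^ (n + 1)) ^ γ := by
  rcases hd0.eq_or_lt with rfl | hd
  · refine ⟨0, by norm_num, (Real.zero_rpow_le_one γ).trans ?_⟩
    exact Real.one_le_rpow_of_pos_of_le_one_of_nonpos (by norm_num) (by norm_num) hγ
  · obtain ⟨n, hlt, hle⟩ := exists_nat_pow_near_of_lt_one hd hd1 (by norm_num : (0 : ℝ) < 1 / 2)
      (by norm_num)
    exact ⟨n, hle, Real.rpow_le_rpow_of_nonpos (by positivity) hlt.le hγ⟩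

lemma half_pow_rpow_mul_eq (n : ℕ) (C D γ : ℝ) :
    ((1 / 2 : ℝ) ^ (n + 1)) ^ γ * (C * ((1 / 2 : ℝ) ^ n) ^ D) =
      (1 / 2 : ℝ) ^ γ * C * ((1 / 2 : ℝ) ^ (γ + D)) ^ n := by
  have h : (0 : ℝ) ≤ 1 / 2 := by norm_num
  simp only [← Real.rpow_natCast, ← Real.rpow_mul h]
  rw [mul_left_comm, mul_comm ((1/2:ℝ) ^ γ), mul_assoc, ← Real.rpow_add (by norm_num),
    ← Real.rpow_add (by norm_num)]
  congr 2
  push_cast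
  ring

variable {Ω : Type*} [PseudoMetricSpace Ω] [MeasurableSpace Ω] [OpensMeasurableSpace Ω]
  {ν : Measure Ω}

lemma lintegral_dist_rpow_le_of_measure_closedBall_le {C D γ : ℝ} (hγ : γ ≤ 0)
    (hdist : ∀ ξ η : Ω, dist ξ η ≤ 1)
    (hball : ∀ ξ r, 0 < r → ν (closedBall ξ r) ≤ ENNReal.ofReal (C * r ^ D)) (ξ : Ω) :
    ∫⁻ η, ENNReal.ofReal (dist ξ η ^ γ) ∂ν ≤
      ENNReal.ofReal ((1 / 2) ^ γ * C) * ∑' n : ℕ, ENNReal.ofReal ((1 / 2) ^ (γ + D)) ^ n := by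
  set c : ℕ → ℝ≥0∞ := fun n => ENNReal.ofReal (((1 / 2 : ℝ) ^ (n + 1)) ^ γ)
  have hpt : ∀ η, ENNReal.ofReal (dist ξ η ^ γ) ≤
      ∑' n, (closedBall ξ ((1 / 2 : ℝ) ^ n)).indicator (fun _ => c n) η := by
    intro η
    obtain ⟨n, hn, hγn⟩ := exists_le_half_pow_and_rpow_le dist_nonneg (hdist ξ η) hγ
    calc ENNReal.ofReal (dist ξ η ^ γ) ≤ c n := ENNReal.ofReal_le_ofReal hγn
      _ = (closedBall ξ ((1 / 2 : ℝ) ^ n)).indicator (fun _ => c n) η := by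
          rw [indicator_of_mem (mem_closedBall'.2 hn)]
      _ ≤ _ := ENNReal.le_tsum n
  calc ∫⁻ η, ENNReal.ofReal (dist ξ η ^ γ) ∂ν
      ≤ ∫⁻ η, ∑' n, (closedBall ξ ((1 / 2 : ℝ) ^ n)).indicator (fun _ => c n) η ∂ν :=
        lintegral_mono hpt
    _ = ∑' n, c n * ν (closedBall ξ ((1 / 2 : ℝ) ^ n)) := by
        rw [lintegral_tsum fun n =>
          (measurable_const.indicator measurableSet_closedBall).aemeasurable]
        simp only [lintegral_indicator_const measurableSet_closedBall]
    _ ≤ ∑' n : ℕ, ENNReal.ofReal ((1 / 2) ^ γ * C) * ENNReal.ofReal ((1 / 2) ^ (γ + D)) ^ n := by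
        refine ENNReal.tsum_le_tsum fun n => ?_
        calc c n * ν (closedBall ξ ((1 / 2 : ℝ) ^ n))
            ≤ c n * ENNReal.ofReal (C * ((1 / 2 : ℝ) ^ n) ^ D) := by
              gcongr; exact hball ξ _ (by positivity)
          _ = _ := by
              rw [← ENNReal.ofReal_mul (by positivity), half_pow_rpow_mul_eq,
                ENNReal.ofReal_mul' (by positivity), ENNReal.ofReal_pow (by positivity)]
    _ = _ := ENNReal.tsum_mul_left

end DyadicKernelEstimate

section AhlforsRegular

open Set

variable {Ω : Type*} [PseudoMetricSpace Ω] [MeasurableSpace Ω]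
  {ν : Measure Ω} [IsProbabilityMeasure ν] {Cν D : ℝ}

lemma exists_measure_closedBall_le_of_measure_ball_le (hD : 0 ≤ D)
    (hdiam : 0 < diam (univ : Set Ω))
    (hAR : ∀ ξ : Ω, ∀ r : ℝ, 0 < r → r ≤ diam (univ : Set Ω) →
      ν (ball ξ r) ≤ ENNReal.ofReal (Cν * r ^ D)) :
    ∃ C : ℝ, ∀ ξ r, 0 < r → ν (closedBall ξ r) ≤ ENNReal.ofReal (C * r ^ D) := by
  refine ⟨max (Cν * 2 ^ D) ((2 / diam (univ : Set Ω)) ^ D), fun ξ r hr => ?_⟩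
  rcases le_or_gt (2 * r) (diam (univ : Set Ω)) with hsmall | hlarge
  · calc ν (closedBall ξ r) ≤ ν (ball ξ (2 * r)) :=
          measure_mono (closedBall_subset_ball (by linarith))
      _ ≤ ENNReal.ofReal (Cν * (2 * r) ^ D) := hAR ξ (2 * r) (by positivity) hsmall
      _ ≤ _ := by
          rw [Real.mul_rpow zero_le_two hr.le, ← mul_assoc]
          gcongr
          exact le_max_left _ _
  · calc ν (closedBall ξ r) ≤ 1 := prob_le_one
      _ = ENNReal.ofReal 1 := ENNReal.ofReal_one.symm
      _ ≤ _ := by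
          gcongr
          calc (1 : ℝ) ≤ (2 / diam (univ : Set Ω) * r) ^ D :=
                Real.one_le_rpow (by rw [div_mul_eq_mul_div, le_div_iff₀ hdiam]; linarith) hD
            _ = (2 / diam (univ : Set Ω)) ^ D * r ^ D := Real.mul_rpow (by positivity) hr.le
            _ ≤ _ := by gcongr; exact le_max_right _ _

lemma exists_lintegral_dist_rpow_le [OpensMeasurableSpace Ω] [CompactSpace Ω] (hD : 0 ≤ D)
    (hdiam : diam (univ : Set Ω) ≤ 1)
    (hAR : ∀ ξ : Ω, ∀ r : ℝ, 0 < r → r ≤ diam (univ : Set Ω) →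
      ν (ball ξ r) ≤ ENNReal.ofReal (Cν * r ^ D)) {γ : ℝ} (hγ : -D < γ) :
    ∃ M : ℝ≥0∞, M ≠ ∞ ∧ ∀ ξ, ∫⁻ η, ENNReal.ofReal (dist ξ η ^ γ) ∂ν ≤ M := by
  have hdist : ∀ ξ η : Ω, dist ξ η ≤ diam (univ : Set Ω) := fun ξ η =>
    dist_le_diam_of_mem isCompact_univ.isBounded trivial trivial
  by_cases htriv : 0 ≤ γ ∨ diam (univ : Set Ω) = 0
  · have hle : ∀ ξ η : Ω, dist ξ η ^ γ ≤ 1 := fun ξ η => by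
      rcases htriv with hγ0 | hd0
      · exact Real.rpow_le_one dist_nonneg ((hdist ξ η).trans hdiam) hγ0
      · rw [le_antisymm (hd0 ▸ hdist ξ η) dist_nonneg]
        exact Real.zero_rpow_le_one γ
    refine ⟨1, ENNReal.one_ne_top, fun ξ => ?_⟩
    calc ∫⁻ η, ENNReal.ofReal (dist ξ η ^ γ) ∂ν ≤ ∫⁻ _, 1 ∂ν :=
          lintegral_mono fun η => ENNReal.ofReal_le_one.2 (hle ξ η)
      _ = 1 := by simp
  push Not at htriv
  obtain ⟨C, hC⟩ := exists_measure_closedBall_le_of_measure_ball_le hD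
    (diam_nonneg.lt_of_ne' htriv.2) hAR
  refine ⟨_, ?_, lintegral_dist_rpow_le_of_measure_closedBall_le htriv.1.le
    (fun ξ η => (hdist ξ η).trans hdiam) hC⟩
  refine ENNReal.mul_ne_top ENNReal.ofReal_ne_top (tsum_geometric_lt_top.2 ?_).ne
  exact ENNReal.ofReal_lt_one.2 (Real.rpow_lt_one (by norm_num) (by norm_num) (by linarith))

end AhlforsRegular

lemma enorm_rpow_sq {x : ℝ} (hx : 0 ≤ x) (s : ℝ) : ‖x ^ s‖ₑ ^ 2 = ENNReal.ofReal (x ^ (2 * s)) := by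
  rw [Real.enorm_of_nonneg (Real.rpow_nonneg hx s), ← ENNReal.ofReal_pow (Real.rpow_nonneg hx s),
    ← Real.rpow_natCast, ← Real.rpow_mul hx, mul_comm]
  norm_num

theorem derivation_adjoint_general
    {Ω : Type*} [MetricSpace Ω] [CompactSpace Ω] [MeasurableSpace Ω] [BorelSpace Ω]
    (ν : Measure Ω) [IsProbabilityMeasure ν]
    (D : ℝ) (hD : 0 < D)
    (hdiam : Metric.diam (Set.univ : Set Ω) ≤ 1)
    (Cν : ℝ)
    (hAR : ∀ ξ : Ω, ∀ r : ℝ, 0 < r → r ≤ Metric.diam (Set.univ : Set Ω) →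
      ENNReal.ofReal (Cν⁻¹ * r ^ D) ≤ ν (Metric.ball ξ r) ∧
        ν (Metric.ball ξ r) ≤ ENNReal.ofReal (Cν * r ^ D))
    (t : ℝ) (ht : 0 < t)
    (v : Ω → ℂ) (hv : MemLp v 2 ν)
    (F : Ω × Ω → ℂ) (hF : MemLp F 2 (ν.prod ν)) :
    (∀ᵐ ξ ∂ν, Integrable (fun η =>
        (F (ξ, η) - F (η, ξ)) * ((dist ξ η ^ (-((1:ℝ)/2 - t) * D) : ℝ) : ℂ)) ν) ∧
    MemLp (fun ξ => ∫ η,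
        (F (ξ, η) - F (η, ξ)) * ((dist ξ η ^ (-((1:ℝ)/2 - t) * D) : ℝ) : ℂ) ∂ν) 2 ν ∧
    (∫ p : Ω × Ω, (v p.1 - v p.2) * (starRingEnd ℂ) (F p)
          * ((dist p.1 p.2 ^ (-((1:ℝ)/2 - t) * D) : ℝ) : ℂ) ∂(ν.prod ν))
      = ∫ ξ, v ξ * (starRingEnd ℂ) (∫ η,
          (F (ξ, η) - F (η, ξ)) * ((dist ξ η ^ (-((1:ℝ)/2 - t) * D) : ℝ) : ℂ) ∂ν) ∂ν := by
  set e : ℝ := -((1:ℝ)/2 - t) * D with he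
  -- the square of the kernel is `d(ξ, η)^{(2t-1)D}`, integrable since `(2t-1)D > -D`
  obtain ⟨M, hM, hkernel⟩ := exists_lintegral_dist_rpow_le (γ := 2 * e) hD.le hdiam
    (fun ξ r hr hrd => (hAR ξ r hr hrd).2) (by rw [he]; linarith [mul_pos ht hD])
  have hrow : ∀ ξ, ∫⁻ η, ‖dist ξ η ^ e‖ₑ ^ 2 ∂ν ≤ M := fun ξ => by
    simpa only [enorm_rpow_sq dist_nonneg] using hkernel ξ
  exact derivation_adjoint_of_symmetric_kernel (k := fun p => dist p.1 p.2 ^ e)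
    (measurable_dist.pow_const e).aestronglyMeasurable (fun x y => by rw [dist_comm]) hrow hM
    hv hF

/-- Adjoint identity for the derivation `δ_t`: for `v ∈ L²(Ω,ν)` and
`F ∈ L²(Ω×Ω, ν⊗ν)`, the function `G(ξ) = ∫ (F(ξ,η)-F(η,ξ)) d(ξ,η)^{-(1/2-t)D} dν(η)`
is defined a.e., lies in `L²(Ω,ν)`, and `⟨δ_t v, F⟩ = ⟨v, G⟩`. -/
theorem derivation_adjoint
    {Ω : Type*} [MetricSpace Ω] [CompactSpace Ω] [MeasurableSpace Ω] [BorelSpace Ω]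
    (ν : Measure Ω) [IsProbabilityMeasure ν]
    (D : ℝ) (hD : 0 < D)
    (hdiam : Metric.diam (Set.univ : Set Ω) ≤ 1)
    (Cν : ℝ) (hCν : 1 ≤ Cν)
    (hAR : ∀ ξ : Ω, ∀ r : ℝ, 0 < r → r ≤ Metric.diam (Set.univ : Set Ω) →
      ENNReal.ofReal (Cν⁻¹ * r ^ D) ≤ ν (Metric.ball ξ r) ∧
        ν (Metric.ball ξ r) ≤ ENNReal.ofReal (Cν * r ^ D))
    (t : ℝ) (ht : 0 < t)
    (v : Ω → ℂ) (hv : MemLp v 2 ν)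
    (F : Ω × Ω → ℂ) (hF : MemLp F 2 (ν.prod ν)) :
    (∀ᵐ ξ ∂ν, Integrable (fun η =>
        (F (ξ, η) - F (η, ξ)) * ((dist ξ η ^ (-((1:ℝ)/2 - t) * D) : ℝ) : ℂ)) ν) ∧
    MemLp (fun ξ => ∫ η,
        (F (ξ, η) - F (η, ξ)) * ((dist ξ η ^ (-((1:ℝ)/2 - t) * D) : ℝ) : ℂ) ∂ν) 2 ν ∧
    (∫ p : Ω × Ω, (v p.1 - v p.2) * (starRingEnd ℂ) (F p)
          * ((dist p.1 p.2 ^ (-((1:ℝ)/2 - t) * D) : ℝ) : ℂ) ∂(ν.prod ν))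
      = ∫ ξ, v ξ * (starRingEnd ℂ) (∫ η,
          (F (ξ, η) - F (η, ξ)) * ((dist ξ η ^ (-((1:ℝ)/2 - t) * D) : ℝ) : ℂ) ∂ν) ∂ν :=
  derivation_adjoint_general ν D hD hdiam Cν hAR t ht v hv F hF
end

section
/- Let t > 0. If v ∈ L²(Ω, ν) satisfies I_t v(ξ) = σ_t(ξ) · v(ξ) for ν-almost every ξ (equivalently, v is a fixed vector of the Riesz operator R_t = M_{σ_t⁻¹} I_t), then v is ν-almost everywhere equal to a constant. -/
open MeasureTheory Metric Function
open scoped ENNReal NNReal RealInnerProductSpace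

/-! The kernel `k(ξ, η) = d(ξ, η) ^ (-(1 - 2t) D)` is symmetric, and Ahlfors regularity bounds its
row integrals `σ_t` uniformly (sum the kernel over the dyadic shells `2⁻ⁿ⁻¹ < d(ξ, ·) ≤ 2⁻ⁿ`, whose
masses decay like `2^(-nD)`; the series is geometric because `D - (1 - 2t) D = 2tD > 0`).
Hence for `v ∈ L²` the energy `∬ k(ξ, η) |v ξ - v η|²` is finite, and expanding the square and
using the symmetry of `k` it equals `2 (∫ σ_t |v|² - Re ∫ conj v · I_t v)`. The fixed-vector
equation makes it vanish, and as `k > 0` off the diagonal, `v ξ = v η` for almost every pair. -/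

section KernelEnergy

variable {X : Type*} [MeasurableSpace X] {μ : Measure X} {k : X → X → ℝ} {C : ℝ≥0}

lemma lintegral_prod_ofReal_kernel_mul_le (hkm : Measurable (uncurry k))
    (hkC : ∀ x, ∫⁻ y, ENNReal.ofReal (k x y) ∂μ ≤ C) (f : X → ℝ≥0∞) :
    ∫⁻ p, ENNReal.ofReal (k p.1 p.2) * f p.1 ∂μ.prod μ ≤ C * ∫⁻ x, f x ∂μ :=
  calc ∫⁻ p, ENNReal.ofReal (k p.1 p.2) * f p.1 ∂μ.prod μ
      ≤ ∫⁻ x, ∫⁻ y, ENNReal.ofReal (k x y) * f x ∂μ ∂μ := lintegral_prod_le _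
    _ = ∫⁻ x, (∫⁻ y, ENNReal.ofReal (k x y) ∂μ) * f x ∂μ := lintegral_congr fun _ =>
        lintegral_mul_const'' _ (hkm.comp measurable_prodMk_left).ennreal_ofReal.aemeasurable
    _ ≤ ∫⁻ x, C * f x ∂μ := lintegral_mono fun x => mul_le_mul_left (hkC x) _
    _ = C * ∫⁻ x, f x ∂μ := lintegral_const_mul' _ _ ENNReal.coe_ne_top

lemma integral_kernel_mul_snd_eq_fst [SFinite μ] (hk : ∀ x y, k x y = k y x) (g : X → ℝ) :
    ∫ p, k p.1 p.2 * g p.2 ∂μ.prod μ = ∫ p, k p.1 p.2 * g p.1 ∂μ.prod μ := by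
  simpa only [Prod.fst_swap, Prod.snd_swap, hk _ _] using
    integral_prod_swap (μ := μ) (ν := μ) fun p => k p.1 p.2 * g p.1

variable {F : Type*} [NormedAddCommGroup F] [NormedSpace ℝ F]

lemma integrable_kernel_smul_fst (hk0 : ∀ x y, 0 ≤ k x y) (hkm : Measurable (uncurry k))
    (hkC : ∀ x, ∫⁻ y, ENNReal.ofReal (k x y) ∂μ ≤ C) {g : X → F} (hg : Integrable g μ) :
    Integrable (fun p : X × X => k p.1 p.2 • g p.1) (μ.prod μ) := by
  refine ⟨hkm.aestronglyMeasurable.smul hg.1.comp_fst, ?_⟩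
  simp only [HasFiniteIntegral, enorm_smul, Real.enorm_of_nonneg (hk0 _ _)]
  exact (lintegral_prod_ofReal_kernel_mul_le hkm hkC _).trans_lt
    (ENNReal.mul_lt_top ENNReal.coe_lt_top hg.2)

lemma integrable_kernel_smul_snd [SFinite μ] (hk0 : ∀ x y, 0 ≤ k x y)
    (hk : ∀ x y, k x y = k y x) (hkm : Measurable (uncurry k))
    (hkC : ∀ x, ∫⁻ y, ENNReal.ofReal (k x y) ∂μ ≤ C) {g : X → F} (hg : Integrable g μ) :
    Integrable (fun p : X × X => k p.1 p.2 • g p.2) (μ.prod μ) := by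
  simpa only [comp_def, Prod.fst_swap, Prod.snd_swap, hk _ _] using
    (integrable_kernel_smul_fst hk0 hkm hkC hg).swap

variable [IsFiniteMeasure μ] {E : Type*} [NormedAddCommGroup E] [InnerProductSpace ℝ E]
  {w : X → E}

lemma integrable_kernel_mul_inner (hk0 : ∀ x y, 0 ≤ k x y) (hk : ∀ x y, k x y = k y x)
    (hkm : Measurable (uncurry k)) (hkC : ∀ x, ∫⁻ y, ENNReal.ofReal (k x y) ∂μ ≤ C)
    (hw : MemLp w 2 μ) :
    Integrable (fun p : X × X => k p.1 p.2 * ⟪w p.1, w p.2⟫) (μ.prod μ) := by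
  have hw2 : Integrable (fun x => ‖w x‖ ^ 2) μ := hw.integrable_norm_pow two_ne_zero
  refine Integrable.mono' ((integrable_kernel_smul_fst hk0 hkm hkC hw2).add
      (integrable_kernel_smul_snd hk0 hk hkm hkC hw2))
    (hkm.aestronglyMeasurable.mul (hw.1.comp_fst.inner hw.1.comp_snd)) (ae_of_all _ fun p => ?_)
  have hinner : |⟪w p.1, w p.2⟫| ≤ ‖w p.1‖ ^ 2 + ‖w p.2‖ ^ 2 :=
    (abs_real_inner_le_norm _ _).trans (by nlinarith [norm_nonneg (w p.1), norm_nonneg (w p.2)])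
  simp only [Pi.add_apply, Real.norm_eq_abs, abs_mul, abs_of_nonneg (hk0 _ _), smul_eq_mul]
  nlinarith [hk0 p.1 p.2]

lemma mul_norm_sub_sq_real (a : ℝ) (u v : E) :
    a * ‖u - v‖ ^ 2 = a * ‖u‖ ^ 2 + a * ‖v‖ ^ 2 - 2 * (a * ⟪u, v⟫) := by
  rw [norm_sub_sq_real]
  ring

lemma integrable_kernel_mul_norm_sub_sq (hk0 : ∀ x y, 0 ≤ k x y) (hk : ∀ x y, k x y = k y x)
    (hkm : Measurable (uncurry k)) (hkC : ∀ x, ∫⁻ y, ENNReal.ofReal (k x y) ∂μ ≤ C)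
    (hw : MemLp w 2 μ) :
    Integrable (fun p : X × X => k p.1 p.2 * ‖w p.1 - w p.2‖ ^ 2) (μ.prod μ) := by
  have hw2 : Integrable (fun x => ‖w x‖ ^ 2) μ := hw.integrable_norm_pow two_ne_zero
  simp only [mul_norm_sub_sq_real]
  exact ((integrable_kernel_smul_fst hk0 hkm hkC hw2).add
    (integrable_kernel_smul_snd hk0 hk hkm hkC hw2)).sub
    ((integrable_kernel_mul_inner hk0 hk hkm hkC hw).const_mul 2)

variable [CompleteSpace E]

lemma integral_kernel_mul_inner (hk0 : ∀ x y, 0 ≤ k x y) (hk : ∀ x y, k x y = k y x)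
    (hkm : Measurable (uncurry k)) (hkC : ∀ x, ∫⁻ y, ENNReal.ofReal (k x y) ∂μ ≤ C)
    (hw : MemLp w 2 μ) :
    ∫ p, k p.1 p.2 * ⟪w p.1, w p.2⟫ ∂μ.prod μ = ∫ x, ⟪w x, ∫ y, k x y • w y ∂μ⟫ ∂μ := by
  rw [integral_prod _ (integrable_kernel_mul_inner hk0 hk hkm hkC hw)]
  refine integral_congr_ae ?_
  filter_upwards
    [(integrable_kernel_smul_snd hk0 hk hkm hkC (hw.integrable one_le_two)).prod_right_ae] with x hx
  simp only [← integral_inner hx, real_inner_smul_right]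

theorem integral_kernel_mul_norm_sub_sq (hk0 : ∀ x y, 0 ≤ k x y) (hk : ∀ x y, k x y = k y x)
    (hkm : Measurable (uncurry k)) (hkC : ∀ x, ∫⁻ y, ENNReal.ofReal (k x y) ∂μ ≤ C)
    (hw : MemLp w 2 μ) :
    ∫ p, k p.1 p.2 * ‖w p.1 - w p.2‖ ^ 2 ∂μ.prod μ =
      2 * (∫ x, (∫ y, k x y ∂μ) * ‖w x‖ ^ 2 ∂μ - ∫ x, ⟪w x, ∫ y, k x y • w y ∂μ⟫ ∂μ) := by
  have hw2 : Integrable (fun x => ‖w x‖ ^ 2) μ := hw.integrable_norm_pow two_ne_zero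
  have h1 := integrable_kernel_smul_fst hk0 hkm hkC hw2
  have h2 := integrable_kernel_smul_snd hk0 hk hkm hkC hw2
  simp only [smul_eq_mul] at h1 h2
  have hdiag : ∫ p, k p.1 p.2 * ‖w p.1‖ ^ 2 ∂μ.prod μ = ∫ x, (∫ y, k x y ∂μ) * ‖w x‖ ^ 2 ∂μ := by
    simp only [integral_prod _ h1, integral_mul_const]
  simp only [mul_norm_sub_sq_real]
  rw [integral_sub (f := fun p => k p.1 p.2 * ‖w p.1‖ ^ 2 + k p.1 p.2 * ‖w p.2‖ ^ 2)
    (h1.add h2) ((integrable_kernel_mul_inner hk0 hk hkm hkC hw).const_mul 2),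
    integral_add h1 h2, integral_const_mul, integral_kernel_mul_snd_eq_fst hk (‖w ·‖ ^ 2),
    hdiag, integral_kernel_mul_inner hk0 hk hkm hkC hw]
  ring

theorem ae_eq_fst_snd_of_integral_smul_eq (hk0 : ∀ x y, 0 ≤ k x y)
    (hk : ∀ x y, k x y = k y x) (hkm : Measurable (uncurry k))
    (hkC : ∀ x, ∫⁻ y, ENNReal.ofReal (k x y) ∂μ ≤ C) (hk_eq_zero : ∀ x y, k x y = 0 → x = y)
    (hw : MemLp w 2 μ) (hfix : ∀ᵐ x ∂μ, ∫ y, k x y • w y ∂μ = (∫ y, k x y ∂μ) • w x) :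
    ∀ᵐ p ∂μ.prod μ, w p.1 = w p.2 := by
  have hzero : ∫ p, k p.1 p.2 * ‖w p.1 - w p.2‖ ^ 2 ∂μ.prod μ = 0 := by
    rw [integral_kernel_mul_norm_sub_sq hk0 hk hkm hkC hw, sub_eq_zero.mpr, mul_zero]
    refine integral_congr_ae ?_
    filter_upwards [hfix] with x hx
    rw [hx, real_inner_smul_right, real_inner_self_eq_norm_sq]
  have hae := (integral_eq_zero_iff_of_nonneg
    (fun p : X × X => mul_nonneg (hk0 p.1 p.2) (sq_nonneg _))
    (integrable_kernel_mul_norm_sub_sq hk0 hk hkm hkC hw)).mp hzero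
  filter_upwards [hae] with p hp
  rcases mul_eq_zero.mp hp with hkp | hwp
  · rw [hk_eq_zero _ _ hkp]
  · exact sub_eq_zero.mp (norm_eq_zero.mp ((pow_eq_zero_iff two_ne_zero).mp hwp))

end KernelEnergy

lemma exists_ae_eq_const_of_ae_eq_fst_snd {X Y : Type*} [MeasurableSpace X] {μ : Measure X}
    [SFinite μ] [NeZero μ] {f : X → Y} (h : ∀ᵐ p ∂μ.prod μ, f p.1 = f p.2) :
    ∃ c, f =ᵐ[μ] fun _ => c :=
  let ⟨x, hx⟩ := (Measure.ae_ae_of_ae_prod h).exists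
  ⟨f x, hx.mono fun _ hy => hy.symm⟩

section AhlforsRegular

variable {Ω : Type*} [PseudoMetricSpace Ω] [MeasurableSpace Ω] {ν : Measure Ω} {C D : ℝ}

lemma exists_measure_ball_le_rpow [IsFiniteMeasure ν] {R : ℝ} (hR : 0 < R) (hD : 0 ≤ D)
    (h : ∀ ξ r, 0 < r → r ≤ R → ν (ball ξ r) ≤ ENNReal.ofReal (C * r ^ D)) :
    ∃ C' : ℝ, 0 ≤ C' ∧ ∀ ξ r, 0 < r → ν (ball ξ r) ≤ ENNReal.ofReal (C' * r ^ D) := by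
  set m := ν.real Set.univ
  have hRD : 0 < R ^ D := Real.rpow_pos_of_pos hR D
  have hm : 0 ≤ m / R ^ D := div_nonneg measureReal_nonneg hRD.le
  refine ⟨max C 0 + m / R ^ D, by positivity, fun ξ r hr => ?_⟩
  have hrD : 0 ≤ r ^ D := Real.rpow_nonneg hr.le D
  rcases le_or_gt r R with hrR | hRr
  · refine (h ξ r hr hrR).trans (ENNReal.ofReal_le_ofReal ?_)
    nlinarith [le_max_left C 0]
  · calc ν (ball ξ r) ≤ ν Set.univ := measure_mono (Set.subset_univ _)
      _ = ENNReal.ofReal (m / R ^ D * R ^ D) := by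
          rw [div_mul_cancel₀ _ hRD.ne', ofReal_measureReal]
      _ ≤ ENNReal.ofReal ((max C 0 + m / R ^ D) * r ^ D) := by
          refine ENNReal.ofReal_le_ofReal ?_
          have := Real.rpow_le_rpow hR.le hRr.le hD
          nlinarith [le_max_right C 0]

lemma rpow_half_pow_succ_mul_rpow_two_mul (n : ℕ) (α : ℝ) :
    (((2 : ℝ)⁻¹) ^ (n + 1)) ^ α * (C * (2 * 2⁻¹ ^ n) ^ D) =
      C * 2 ^ D * 2⁻¹ ^ α * (2⁻¹ ^ (D + α)) ^ n := by
  have hr : (0 : ℝ) < 2⁻¹ ^ n := by positivity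
  rw [pow_succ, Real.mul_rpow hr.le (by norm_num), Real.mul_rpow (by norm_num) hr.le,
    Real.rpow_pow_comm (by norm_num), Real.rpow_add hr]
  ring

variable [OpensMeasurableSpace Ω]

lemma lintegral_ofReal_dist_rpow_le_tsum {α : ℝ} (hα : α < 0) {ξ : Ω}
    (hdist : ∀ η, dist ξ η ≤ 1) :
    ∫⁻ η, ENNReal.ofReal (dist ξ η ^ α) ∂ν ≤
      ∑' n : ℕ, ENNReal.ofReal ((2⁻¹ ^ (n + 1)) ^ α) * ν (ball ξ (2 * 2⁻¹ ^ n)) := by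
  have hpt : ∀ η, ENNReal.ofReal (dist ξ η ^ α) ≤
      ∑' n : ℕ, (ball ξ (2 * 2⁻¹ ^ n)).indicator
        (fun _ => ENNReal.ofReal ((2⁻¹ ^ (n + 1)) ^ α)) η := by
    intro η
    rcases (dist_nonneg (x := ξ) (y := η)).eq_or_lt with h0 | hpos
    -- Mathlib's `0 ^ α = 0` for `α ≠ 0`: the singular point of the kernel contributes nothing.
    · rw [← h0, Real.zero_rpow hα.ne, ENNReal.ofReal_zero]
      exact zero_le
    obtain ⟨n, hlt, hle⟩ := exists_nat_pow_near_of_lt_one hpos (hdist η)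
      (by norm_num : (0 : ℝ) < 2⁻¹) (by norm_num)
    have hmem : η ∈ ball ξ (2 * 2⁻¹ ^ n) := by
      rw [mem_ball']
      linarith [pow_pos (by norm_num : (0 : ℝ) < 2⁻¹) n]
    refine le_trans ?_ (ENNReal.le_tsum n)
    rw [Set.indicator_of_mem hmem]
    exact ENNReal.ofReal_le_ofReal (Real.rpow_le_rpow_of_nonpos (by positivity) hlt.le hα.le)
  calc ∫⁻ η, ENNReal.ofReal (dist ξ η ^ α) ∂ν
      ≤ ∫⁻ η, ∑' n : ℕ, (ball ξ (2 * 2⁻¹ ^ n)).indicator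
          (fun _ => ENNReal.ofReal ((2⁻¹ ^ (n + 1)) ^ α)) η ∂ν := lintegral_mono hpt
    _ = _ := by
        rw [lintegral_tsum fun n => (measurable_const.indicator measurableSet_ball).aemeasurable]
        simp only [lintegral_indicator_const measurableSet_ball]

theorem exists_lintegral_ofReal_dist_rpow_le [IsFiniteMeasure ν] (hC : 0 ≤ C)
    (hdist : ∀ ξ η : Ω, dist ξ η ≤ 1)
    (hball : ∀ ξ r, 0 < r → ν (ball ξ r) ≤ ENNReal.ofReal (C * r ^ D)) {α : ℝ} (hα : 0 < D + α) :
    ∃ C' : ℝ≥0, ∀ ξ, ∫⁻ η, ENNReal.ofReal (dist ξ η ^ α) ∂ν ≤ C' := by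
  rcases le_or_gt 0 α with hα0 | hα0
  · refine ⟨(ν Set.univ).toNNReal, fun ξ => ?_⟩
    rw [ENNReal.coe_toNNReal (measure_ne_top ν _), ← lintegral_one]
    exact lintegral_mono fun η =>
      ENNReal.ofReal_le_one.mpr (Real.rpow_le_one dist_nonneg (hdist ξ η) hα0)
  set q : ℝ := 2⁻¹ ^ (D + α)
  have hq0 : 0 ≤ q := by positivity
  have hq1 : q < 1 := Real.rpow_lt_one (by norm_num) (by norm_num) hα
  set M : ℝ := C * 2 ^ D * 2⁻¹ ^ α
  refine ⟨(M * (1 - q)⁻¹).toNNReal, fun ξ => ?_⟩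
  calc ∫⁻ η, ENNReal.ofReal (dist ξ η ^ α) ∂ν
      ≤ ∑' n : ℕ, ENNReal.ofReal ((2⁻¹ ^ (n + 1)) ^ α) * ν (ball ξ (2 * 2⁻¹ ^ n)) :=
        lintegral_ofReal_dist_rpow_le_tsum hα0 (hdist ξ)
    _ ≤ ∑' n : ℕ, ENNReal.ofReal (M * q ^ n) := by
        refine ENNReal.tsum_le_tsum fun n => ?_
        rw [← rpow_half_pow_succ_mul_rpow_two_mul, ENNReal.ofReal_mul (by positivity)]
        exact mul_le_mul_right (hball ξ _ (by positivity)) _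
    _ = ENNReal.ofReal (M * (1 - q)⁻¹) := by
        rw [← ENNReal.ofReal_tsum_of_nonneg (fun n => by positivity)
          ((summable_geometric_of_lt_one hq0 hq1).mul_left M), tsum_mul_left,
          tsum_geometric_of_lt_one hq0 hq1]

end AhlforsRegular

theorem riesz_fixed_vector_constant_general
    {Ω : Type*} [MetricSpace Ω] [CompactSpace Ω] [MeasurableSpace Ω] [BorelSpace Ω]
    (ν : Measure Ω) [IsProbabilityMeasure ν]
    (D : ℝ) (hD : 0 < D)
    (hdiam : Metric.diam (Set.univ : Set Ω) ≤ 1)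
    (Cν : ℝ)
    (hAR : ∀ ξ : Ω, ∀ r : ℝ, 0 < r → r ≤ Metric.diam (Set.univ : Set Ω) →
      ENNReal.ofReal (Cν⁻¹ * r ^ D) ≤ ν (Metric.ball ξ r) ∧
        ν (Metric.ball ξ r) ≤ ENNReal.ofReal (Cν * r ^ D))
    (t : ℝ) (ht : 0 < t)
    (v : Ω → ℂ) (hv : MemLp v 2 ν)
    (heq : ∀ᵐ ξ ∂ν,
      (∫ η, ((dist ξ η ^ (-(1 - 2*t) * D) : ℝ) : ℂ) * v η ∂ν)
        = ((∫ η, dist ξ η ^ (-(1 - 2*t) * D) ∂ν : ℝ) : ℂ) * v ξ) :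
    ∃ c : ℂ, v =ᵐ[ν] fun _ => c := by
  refine exists_ae_eq_const_of_ae_eq_fst_snd ?_
  rcases subsingleton_or_nontrivial Ω with hΩ | hΩ
  · exact ae_of_all _ fun p => congrArg v (Subsingleton.elim _ _)
  have hdist : ∀ ξ η : Ω, dist ξ η ≤ 1 := fun ξ η =>
    (dist_le_diam_of_mem isCompact_univ.isBounded trivial trivial).trans hdiam
  obtain ⟨C, hC, hball⟩ := exists_measure_ball_le_rpow
    (diam_pos Set.nontrivial_univ isCompact_univ.isBounded) hD.le
    fun ξ r hr hrR => (hAR ξ r hr hrR).2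
  obtain ⟨C', hC'⟩ := exists_lintegral_ofReal_dist_rpow_le hC hdist hball
    (α := -(1 - 2 * t) * D) (by nlinarith)
  refine ae_eq_fst_snd_of_integral_smul_eq (fun _ _ => Real.rpow_nonneg dist_nonneg _)
    (fun ξ η => by rw [dist_comm]) (measurable_dist.pow_const _) hC'
    (fun ξ η h => dist_eq_zero.mp ((Real.rpow_eq_zero_iff_of_nonneg dist_nonneg).mp h).1) hv ?_
  simpa only [Complex.real_smul] using heq

/-- Fixed vectors of the Riesz operator are constant: if `v ∈ L²(Ω,ν)` satisfies
`I_t v(ξ) = σ_t(ξ) v(ξ)` ν-a.e., then `v` is a.e. equal to a constant. -/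
theorem riesz_fixed_vector_constant
    {Ω : Type*} [MetricSpace Ω] [CompactSpace Ω] [MeasurableSpace Ω] [BorelSpace Ω]
    (ν : Measure Ω) [IsProbabilityMeasure ν]
    (D : ℝ) (hD : 0 < D)
    (hdiam : Metric.diam (Set.univ : Set Ω) ≤ 1)
    (Cν : ℝ) (hCν : 1 ≤ Cν)
    (hAR : ∀ ξ : Ω, ∀ r : ℝ, 0 < r → r ≤ Metric.diam (Set.univ : Set Ω) →
      ENNReal.ofReal (Cν⁻¹ * r ^ D) ≤ ν (Metric.ball ξ r) ∧
        ν (Metric.ball ξ r) ≤ ENNReal.ofReal (Cν * r ^ D))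
    (t : ℝ) (ht : 0 < t)
    (v : Ω → ℂ) (hv : MemLp v 2 ν)
    (heq : ∀ᵐ ξ ∂ν,
      (∫ η, ((dist ξ η ^ (-(1 - 2*t) * D) : ℝ) : ℂ) * v η ∂ν)
        = ((∫ η, dist ξ η ^ (-(1 - 2*t) * D) ∂ν : ℝ) : ℂ) * v ξ) :
    ∃ c : ℂ, v =ᵐ[ν] fun _ => c :=
  riesz_fixed_vector_constant_general ν D hD hdiam Cν hAR t ht v hv heq
end

section
/- The sesquilinear form (v, w) ↦ ⟨v, I_t w⟩_{L²} is invariant under π_t(g): for all v, w ∈ L²(Ω, ν), ⟨π_t(g) v, I_t(π_t(g) w)⟩_{L²} = ⟨v, I_t w⟩_{L²}. (Consequently, when I_t is a positive operator, π_t(g) acts unitarily on the Hilbert space obtained from this form.) -/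
/-!
Substitute `ξ = g ξ'` and `η = g η'` in both integrals. Each substitution contributes the
Jacobian `j⁻¹`, so together with the weights `j ^ (1/2 + t)` of `π_t(g)` the kernel
`d(gξ', gη') ^ e`, `e = -(1 - 2t) D`, picks up the factor `(j(gξ') j(gη')) ^ (t - 1/2)`.
Since `t - 1/2 = e / (2D)`, this is exactly the conformality relation raised to the power
`e / (2D)`, and the kernel becomes `d(ξ', η') ^ e`.
-/

open MeasureTheory Metric
open scoped ENNReal

lemma Real.rpow_div_mul_rpow_eq_of_rpow_mul_eq {A B C s : ℝ} (hA : 0 ≤ A) (hB : 0 ≤ B)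
    (hC : 0 ≤ C) (hs : s ≠ 0) (h : A ^ s * B = C ^ s) (e : ℝ) :
    B ^ (e / s) * A ^ e = C ^ e := by
  have hCe : C ^ e = (C ^ s) ^ (e / s) := by rw [← Real.rpow_mul hC, mul_div_cancel₀ e hs]
  rw [hCe, ← h, Real.mul_rpow (Real.rpow_nonneg hA _) hB, ← Real.rpow_mul hA,
    mul_div_cancel₀ e hs, mul_comm]

section ChangeOfVariables

variable {Ω E : Type*} [MeasurableSpace Ω] [NormedAddCommGroup E] [NormedSpace ℝ E]
  {ν : Measure Ω} {g : Ω → Ω} {j : Ω → ℝ}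

lemma integral_inv_density_smul_comp (hg : MeasurableEmbedding g) (hj : Measurable j)
    (hjpos : ∀ᵐ ξ ∂ν, 0 < j ξ)
    (hmap : Measure.map g ν = ν.withDensity (fun ξ => ENNReal.ofReal (j ξ))) (f : Ω → E) :
    ∫ x, (j (g x))⁻¹ • f (g x) ∂ν = ∫ x, f x ∂ν := by
  rw [hg.integral_map (fun y => (j y)⁻¹ • f y) |>.symm, hmap,
    integral_withDensity_eq_integral_toReal_smul hj.ennreal_ofReal
      (Filter.Eventually.of_forall fun _ => ENNReal.ofReal_lt_top)]
  refine integral_congr_ae ?_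
  filter_upwards [hjpos] with x hx
  rw [ENNReal.toReal_ofReal hx.le, smul_inv_smul₀ hx.ne']

lemma ae_comp_of_map_eq_withDensity (hg : Measurable g)
    (hmap : Measure.map g ν = ν.withDensity (fun ξ => ENNReal.ofReal (j ξ)))
    {p : Ω → Prop} (hp : ∀ᵐ ξ ∂ν, p ξ) : ∀ᵐ ξ ∂ν, p (g ξ) :=
  Measure.QuasiMeasurePreserving.ae ⟨hg, hmap ▸ withDensity_absolutelyContinuous _ _⟩ hp

end ChangeOfVariables

section KernelForm

variable {Ω : Type*} [MeasurableSpace Ω]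

/-- `⟨v, I_K w⟩_{L²(ν)}` for the integral operator with kernel `K`. -/
noncomputable def kernelForm (ν : Measure Ω) (K : Ω → Ω → ℝ) (v w : Ω → ℂ) : ℂ :=
  ∫ ξ, v ξ * (starRingEnd ℂ) (∫ η, (K ξ η : ℂ) * w η ∂ν) ∂ν

/-- `π_s(g) v` is `weightedComp (j ^ (1/2 + s)) g⁻¹ v`. -/
def weightedComp (a : Ω → ℝ) (ginv : Ω → Ω) (v : Ω → ℂ) : Ω → ℂ :=
  fun ξ => (a ξ : ℂ) * v (ginv ξ)

theorem kernelForm_weightedComp {ν : Measure Ω} {g ginv : Ω → Ω} (hg : MeasurableEmbedding g)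
    (hgl : Function.LeftInverse ginv g) {j : Ω → ℝ} (hj : Measurable j)
    (hjpos : ∀ᵐ ξ ∂ν, 0 < j ξ)
    (hmap : Measure.map g ν = ν.withDensity (fun ξ => ENNReal.ofReal (j ξ)))
    {a : Ω → ℝ} {K : Ω → Ω → ℝ}
    (hK : ∀ᵐ ξ ∂ν, ∀ᵐ η ∂ν, a (g ξ) / j (g ξ) * K (g ξ) (g η) * (a (g η) / j (g η)) = K ξ η)
    (v w : Ω → ℂ) :
    kernelForm ν K (weightedComp a ginv v) (weightedComp a ginv w) = kernelForm ν K v w := by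
  unfold kernelForm weightedComp
  rw [← integral_inv_density_smul_comp hg hj hjpos hmap]
  refine integral_congr_ae ?_
  filter_upwards [hK, ae_comp_of_map_eq_withDensity hg.measurable hmap hjpos] with ξ hKξ hjξ
  have hinner : ∫ η, (K (g ξ) η : ℂ) * ((a η : ℂ) * w (ginv η)) ∂ν
      = ∫ η, (j (g η))⁻¹ • ((K (g ξ) (g η) : ℂ) * ((a (g η) : ℂ) * w η)) ∂ν := by
    rw [← integral_inv_density_smul_comp hg hj hjpos hmap]
    simp only [hgl _]
  have hscaled : ((a (g ξ) / j (g ξ) : ℝ) : ℂ)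
      * ∫ η, (j (g η))⁻¹ • ((K (g ξ) (g η) : ℂ) * ((a (g η) : ℂ) * w η)) ∂ν
      = ∫ η, (K ξ η : ℂ) * w η ∂ν := by
    rw [← integral_const_mul]
    refine integral_congr_ae ?_
    filter_upwards [hKξ] with η hKη
    rw [← hKη, Complex.real_smul]
    push_cast
    ring
  rw [hgl ξ, hinner, ← hscaled, map_mul, Complex.conj_ofReal, Complex.real_smul]
  push_cast
  ring

end KernelForm

theorem knappStein_form_invariant_general
    {Ω : Type*} [MetricSpace Ω] [MeasurableSpace Ω]
    (ν : Measure Ω) [IsProbabilityMeasure ν]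
    (D t : ℝ) (hD : 0 < D)
    (g ginv : Ω → Ω) (hg : Measurable g) (hginv : Measurable ginv)
    (hgl : Function.LeftInverse ginv g) (hgr : Function.RightInverse ginv g)
    (j : Ω → ℝ) (hj : Measurable j)
    (hjpos : ∀ᵐ ξ ∂ν, 0 < j ξ)
    (hmap : Measure.map g ν = ν.withDensity (fun ξ => ENNReal.ofReal (j ξ)))
    (hconf : ∀ᵐ p ∂(ν.prod ν),
      dist (g p.1) (g p.2) ^ (2*D) * (j (g p.1) * j (g p.2)) = dist p.1 p.2 ^ (2*D)) :
    ∀ v w : Ω → ℂ, MemLp v 2 ν → MemLp w 2 ν →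
      (∫ ξ, (((j ξ ^ ((1:ℝ)/2 + t) : ℝ) : ℂ) * v (ginv ξ))
          * (starRingEnd ℂ) (∫ η, ((dist ξ η ^ (-(1 - 2*t) * D) : ℝ) : ℂ)
              * (((j η ^ ((1:ℝ)/2 + t) : ℝ) : ℂ) * w (ginv η)) ∂ν) ∂ν)
        = ∫ ξ, v ξ * (starRingEnd ℂ)
            (∫ η, ((dist ξ η ^ (-(1 - 2*t) * D) : ℝ) : ℂ) * w η ∂ν) ∂ν := by
  intro v w _ _
  have hjg : ∀ᵐ ξ ∂ν, 0 < j (g ξ) := ae_comp_of_map_eq_withDensity hg hmap hjpos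
  have hexp : (1 : ℝ) / 2 + t - 1 = -(1 - 2 * t) * D / (2 * D) := by
    field_simp
    ring
  have hK : ∀ᵐ ξ ∂ν, ∀ᵐ η ∂ν,
      j (g ξ) ^ ((1:ℝ)/2 + t) / j (g ξ) * dist (g ξ) (g η) ^ (-(1 - 2*t) * D)
        * (j (g η) ^ ((1:ℝ)/2 + t) / j (g η)) = dist ξ η ^ (-(1 - 2*t) * D) := by
    filter_upwards [Measure.ae_ae_of_ae_prod hconf, hjg] with ξ hξ hjξ
    filter_upwards [hξ, hjg] with η hη hjη
    rw [← Real.rpow_sub_one hjξ.ne', ← Real.rpow_sub_one hjη.ne', hexp, mul_right_comm,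
      ← Real.mul_rpow hjξ.le hjη.le]
    exact Real.rpow_div_mul_rpow_eq_of_rpow_mul_eq dist_nonneg (by positivity) dist_nonneg
      (by positivity) hη _
  exact kernelForm_weightedComp
    (MeasurableEquiv.mk ⟨g, ginv, hgl, hgr⟩ hg hginv).measurableEmbedding hgl hj hjpos hmap
    (a := fun ξ => j ξ ^ ((1:ℝ)/2 + t)) (K := fun ξ η => dist ξ η ^ (-(1 - 2*t) * D)) hK v w

/-- Invariance of the sesquilinear form `(v,w) ↦ ⟨v, I_t w⟩_{L²}` under `π_t(g)`:
`⟨π_t(g) v, I_t (π_t(g) w)⟩ = ⟨v, I_t w⟩` for all `v, w ∈ L²(Ω,ν)`, where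
`(π_t(g) v)(ξ) = j(ξ)^{1/2+t} v(g⁻¹ ξ)`. -/
theorem knappStein_form_invariant
    {Ω : Type*} [MetricSpace Ω] [CompactSpace Ω] [MeasurableSpace Ω] [BorelSpace Ω]
    (ν : Measure Ω) [IsProbabilityMeasure ν]
    (D t : ℝ) (hD : 0 < D) (ht : 0 < t)
    (M : ℝ) (hM : ∀ η : Ω,
      (∫⁻ ξ, ENNReal.ofReal (dist ξ η ^ (-(1 - 2*t) * D)) ∂ν) ≤ ENNReal.ofReal M)
    (g ginv : Ω → Ω) (hg : Measurable g) (hginv : Measurable ginv)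
    (hgl : Function.LeftInverse ginv g) (hgr : Function.RightInverse ginv g)
    (j : Ω → ℝ) (hj : Measurable j)
    (hjpos : ∀ᵐ ξ ∂ν, 0 < j ξ)
    (c : ℝ) (hc : 0 < c)
    (hjbdd : ∀ᵐ ξ ∂ν, j ξ ≤ c ∧ (j ξ)⁻¹ ≤ c)
    (hmap : Measure.map g ν = ν.withDensity (fun ξ => ENNReal.ofReal (j ξ)))
    (hconf : ∀ᵐ p ∂(ν.prod ν),
      dist (g p.1) (g p.2) ^ (2*D) * (j (g p.1) * j (g p.2)) = dist p.1 p.2 ^ (2*D)) :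
    ∀ v w : Ω → ℂ, MemLp v 2 ν → MemLp w 2 ν →
      (∫ ξ, (((j ξ ^ ((1:ℝ)/2 + t) : ℝ) : ℂ) * v (ginv ξ))
          * (starRingEnd ℂ) (∫ η, ((dist ξ η ^ (-(1 - 2*t) * D) : ℝ) : ℂ)
              * (((j η ^ ((1:ℝ)/2 + t) : ℝ) : ℂ) * w (ginv η)) ∂ν) ∂ν)
        = ∫ ξ, v ξ * (starRingEnd ℂ)
            (∫ η, ((dist ξ η ^ (-(1 - 2*t) * D) : ℝ) : ℂ) * w η ∂ν) ∂ν :=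
  knappStein_form_invariant_general ν D t hD g ginv hg hginv hgl hgr j hj hjpos hmap hconf
end

section
/- Let H be a complex Hilbert space, S a set, and π, π' : S → B(H) two maps into the bounded operators on H such that ⟨π(s) v, π'(s) w⟩ = ⟨v, w⟩ for every s ∈ S and all v, w ∈ H. Assume the pair (π, π') is weak mixing: for all finite subsets F, F' of H and every ε > 0 there exists s ∈ S such that |⟨π(s) v, w⟩ · ⟨v', π'(s) w'⟩| < ε for all v, w ∈ F and all v', w' ∈ F'. Then the only finite-dimensional subspace V ⊆ H satisfying π(s) V ⊆ V for all s ∈ S is V = {0}. -/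
/-!
If `v ≠ 0` lies in `V` and `(eᵢ)` is an orthonormal basis of `V`, then since `π s v ∈ V`,
`‖v‖² = ⟪π s v, π' s v⟫ = ∑ ᵢ ⟪π s v, eᵢ⟫ ⟪eᵢ, π' s v⟫`, while weak mixing applied to the finite
set `{v, e₁, …, eₙ}` yields an `s` making each of the `n` terms smaller than `‖v‖² / (n + 1)`.
-/

open scoped InnerProductSpace

theorem Submodule.inner_eq_sum_inner_mul_inner_of_mem {𝕜 H ι : Type*} [RCLike 𝕜]
    [NormedAddCommGroup H] [InnerProductSpace 𝕜 H] [Fintype ι] {V : Submodule 𝕜 H}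
    (b : OrthonormalBasis ι 𝕜 V) {x : H} (hx : x ∈ V) (y : H) :
    ⟪x, y⟫_𝕜 = ∑ i, ⟪x, (b i : H)⟫_𝕜 * ⟪(b i : H), y⟫_𝕜 := by
  conv_lhs => rw [← show ((⟨x, hx⟩ : V) : H) = x from rfl, ← b.sum_repr' ⟨x, hx⟩]
  simp [sum_inner, inner_smul_left]

theorem Submodule.norm_inner_le_sum_norm_inner_mul_inner_of_mem {𝕜 H ι : Type*} [RCLike 𝕜]
    [NormedAddCommGroup H] [InnerProductSpace 𝕜 H] [Fintype ι] {V : Submodule 𝕜 H}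
    (b : OrthonormalBasis ι 𝕜 V) {x : H} (hx : x ∈ V) (y : H) :
    ‖⟪x, y⟫_𝕜‖ ≤ ∑ i, ‖⟪x, (b i : H)⟫_𝕜 * ⟪(b i : H), y⟫_𝕜‖ :=
  V.inner_eq_sum_inner_mul_inner_of_mem b hx y ▸ norm_sum_le _ _

theorem weak_mixing_no_finite_dimensional_subrep_general
    {H : Type*} [NormedAddCommGroup H] [InnerProductSpace ℂ H]
    {S : Type*} (π π' : S → (H →L[ℂ] H))
    (hdual : ∀ s : S, ∀ v w : H, (inner ℂ (π s v) (π' s w) : ℂ) = inner ℂ v w)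
    (hwm : ∀ F F' : Set H, F.Finite → F'.Finite → ∀ ε : ℝ, 0 < ε →
      ∃ s : S, ∀ v ∈ F, ∀ w ∈ F, ∀ v' ∈ F', ∀ w' ∈ F',
        ‖(inner ℂ (π s v) w : ℂ) * (inner ℂ v' (π' s w') : ℂ)‖ < ε) :
    ∀ V : Submodule ℂ H, FiniteDimensional ℂ ↥V →
      (∀ s : S, ∀ x ∈ V, π s x ∈ V) → V = ⊥ := by
  intro V _ hinv
  rw [Submodule.eq_bot_iff]
  intro v hv
  by_contra hv0
  set n := Module.finrank ℂ V
  let b := stdOrthonormalBasis ℂ V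
  set ε := ‖v‖ ^ 2 / (n + 1)
  have hε : 0 < ε := by positivity
  set F := insert v (Set.range fun i => (b i : H))
  have hF : F.Finite := (Set.finite_range _).insert v
  obtain ⟨s, hs⟩ := hwm F F hF hF ε hε
  have hsmall (i : Fin n) : ‖⟪π s v, (b i : H)⟫_ℂ * ⟪(b i : H), π' s v⟫_ℂ‖ ≤ ε :=
    (hs v (.inl rfl) (b i) (.inr ⟨i, rfl⟩) (b i) (.inr ⟨i, rfl⟩) v (.inl rfl)).le
  have hle : ‖v‖ ^ 2 ≤ n * ε := calc
    ‖v‖ ^ 2 = ‖⟪π s v, π' s v⟫_ℂ‖ := by rw [hdual, inner_self_eq_norm_sq_to_K]; simp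
    _ ≤ ∑ i, ‖⟪π s v, (b i : H)⟫_ℂ * ⟪(b i : H), π' s v⟫_ℂ‖ :=
      V.norm_inner_le_sum_norm_inner_mul_inner_of_mem b (hinv s v hv) _
    _ ≤ ∑ _i : Fin n, ε := Finset.sum_le_sum fun i _ => hsmall i
    _ = n * ε := by simp
  have hv2 : 0 < ‖v‖ ^ 2 := by positivity
  have hlt : (n : ℝ) * ε < ‖v‖ ^ 2 := by
    rw [mul_div_assoc', div_lt_iff₀ (by positivity)]; nlinarith
  exact hle.not_gt hlt

/-- A weak mixing dual system of Hilbertian representations admits no nonzero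
finite-dimensional invariant subspace. -/
theorem weak_mixing_no_finite_dimensional_subrep
    {H : Type*} [NormedAddCommGroup H] [InnerProductSpace ℂ H] [CompleteSpace H]
    {S : Type*} (π π' : S → (H →L[ℂ] H))
    (hdual : ∀ s : S, ∀ v w : H, (inner ℂ (π s v) (π' s w) : ℂ) = inner ℂ v w)
    (hwm : ∀ F F' : Set H, F.Finite → F'.Finite → ∀ ε : ℝ, 0 < ε →
      ∃ s : S, ∀ v ∈ F, ∀ w ∈ F, ∀ v' ∈ F', ∀ w' ∈ F',
        ‖(inner ℂ (π s v) w : ℂ) * (inner ℂ v' (π' s w') : ℂ)‖ < ε) :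
    ∀ V : Submodule ℂ H, FiniteDimensional ℂ ↥V →
      (∀ s : S, ∀ x ∈ V, π s x ∈ V) → V = ⊥ :=
  weak_mixing_no_finite_dimensional_subrep_general π π' hdual hwm
end

section
/- For every t > 0 there exists C ≥ 1 such that for every η ∈ Ω and every s ∈ (0, diam Ω]: C⁻¹ · s^{−2tD} ≤ ∫_Ω (max(d(ξ, η), s))^{−(1+2t)D} dν(ξ) ≤ C · s^{−2tD}. -/
open MeasureTheory Metric Set
open scoped ENNReal

/-!
The integrand equals `s^{-a}` on `B(η, s)`, with `a = (1 + 2t)D`, so Ahlfors regularity from below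
gives the lower bound. For the upper bound, cut `Ω` into `B(η, s)` and the dyadic annuli
`B(η, 2^k s) \ B(η, 2^{k-1} s)`: on the `k`-th piece the integrand is at most `(2^{k-1} s)^{-a}` and
its mass at most `C (2^k s)^D`, so the contributions form a geometric series of ratio
`2^{D-a} < 1` and sum to a multiple of `s^{D-a} = s^{-2tD}`.
-/

section MaxDistIntegral

variable {X : Type*} [PseudoMetricSpace X]

theorem iUnion_ball_two_pow_mul (x : X) {s : ℝ} (hs : 0 < s) :
    ⋃ n : ℕ, ball x (2 ^ n * s) = univ :=
  eq_univ_of_forall fun ξ => mem_iUnion.2 <|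
    (pow_unbounded_of_one_lt (dist ξ x / s) one_lt_two).imp fun _ hn =>
      mem_ball.2 ((div_lt_iff₀ hs).1 hn)

theorem le_max_dist_of_mem_disjointed_ball {x ξ : X} {s : ℝ} {k : ℕ}
    (hξ : ξ ∈ disjointed (fun n : ℕ => ball x (2 ^ n * s)) k) (hs : 0 < s) :
    2 ^ k * s / 2 ≤ max (dist ξ x) s := by
  cases k with
  | zero => linarith [le_max_right (dist ξ x) s]
  | succ k =>
    have hmono : Monotone fun n : ℕ => ball x (2 ^ n * s) := fun _ _ h =>
      ball_subset_ball (by gcongr; norm_num)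
    rw [hmono.disjointed_add_one] at hξ
    have hk : 2 ^ k * s ≤ dist ξ x := not_lt.1 fun h => hξ.2 (mem_ball.2 h)
    rw [pow_succ]
    linarith [le_max_left (dist ξ x) s]

theorem continuous_max_dist_rpow (x : X) {s : ℝ} (hs : 0 < s) (p : ℝ) :
    Continuous fun ξ => max (dist ξ x) s ^ p :=
  ((continuous_id.dist continuous_const).max continuous_const).rpow_const fun _ =>
    Or.inl (hs.trans_le (le_max_right _ _)).ne'

variable [MeasurableSpace X]

theorem measure_ball_le_of_forall_le {μ : Measure X} [IsZeroOrProbabilityMeasure μ] {x : X}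
    {C D R : ℝ} (hD : 0 ≤ D) (hR : 0 < R)
    (hμ : ∀ r, 0 < r → r ≤ R → μ (ball x r) ≤ ENNReal.ofReal (C * r ^ D)) {r : ℝ} (hr : 0 < r) :
    μ (ball x r) ≤ ENNReal.ofReal (max C (R ^ (-D)) * r ^ D) := by
  rcases le_or_gt r R with hrR | hRr
  · exact (hμ r hr hrR).trans <| ENNReal.ofReal_le_ofReal <|
      mul_le_mul_of_nonneg_right (le_max_left _ _) (Real.rpow_nonneg hr.le _)
  · refine prob_le_one.trans ?_
    rw [← ENNReal.ofReal_one]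
    refine ENNReal.ofReal_le_ofReal ?_
    calc (1 : ℝ) = R ^ (-D) * R ^ D := by
          rw [Real.rpow_neg hR.le, inv_mul_cancel₀ (Real.rpow_pos_of_pos hR _).ne']
      _ ≤ max C (R ^ (-D)) * r ^ D :=
          mul_le_mul (le_max_right _ _) (Real.rpow_le_rpow hR.le hRr.le hD)
            (Real.rpow_nonneg hR.le _) (le_max_of_le_right (Real.rpow_nonneg hR.le _))

variable (μ : Measure X) {x : X} {C D a s : ℝ}

theorem setLIntegral_disjointed_ball_le (ha : 0 ≤ a) (hs : 0 < s)
    (hμ : ∀ r, 0 < r → μ (ball x r) ≤ ENNReal.ofReal (C * r ^ D)) (k : ℕ) :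
    ∫⁻ ξ in disjointed (fun n : ℕ => ball x (2 ^ n * s)) k,
        ENNReal.ofReal (max (dist ξ x) s ^ (-a)) ∂μ ≤
      ENNReal.ofReal (C * 2 ^ a * s ^ (D - a) * (2 ^ (D - a)) ^ k) := by
  set u : ℝ := 2 ^ k * s
  have hu : 0 < u := by positivity
  have hscale : u ^ (-a) * u ^ D = (2 ^ (D - a)) ^ k * s ^ (D - a) := by
    rw [← Real.rpow_add hu, Real.rpow_pow_comm zero_le_two, ← Real.mul_rpow (by positivity) hs.le,
      neg_add_eq_sub]
  calc ∫⁻ ξ in disjointed (fun n : ℕ => ball x (2 ^ n * s)) k,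
        ENNReal.ofReal (max (dist ξ x) s ^ (-a)) ∂μ
      ≤ ∫⁻ _ in disjointed (fun n : ℕ => ball x (2 ^ n * s)) k,
          ENNReal.ofReal ((u / 2) ^ (-a)) ∂μ :=
        setLIntegral_mono measurable_const fun ξ hξ => ENNReal.ofReal_le_ofReal <|
          Real.rpow_le_rpow_of_nonpos (by positivity)
            (le_max_dist_of_mem_disjointed_ball hξ hs) (neg_nonpos.2 ha)
    _ = ENNReal.ofReal ((u / 2) ^ (-a)) * μ (disjointed (fun n : ℕ => ball x (2 ^ n * s)) k) :=
        setLIntegral_const _ _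
    _ ≤ ENNReal.ofReal ((u / 2) ^ (-a)) * ENNReal.ofReal (C * u ^ D) := by
        gcongr
        exact (measure_mono (disjointed_subset _ _)).trans (hμ u hu)
    _ = ENNReal.ofReal (C * 2 ^ a * s ^ (D - a) * (2 ^ (D - a)) ^ k) := by
        rw [← ENNReal.ofReal_mul (by positivity), Real.div_rpow hu.le zero_le_two,
          Real.rpow_neg zero_le_two, div_inv_eq_mul]
        congr 1
        linear_combination C * 2 ^ a * hscale

theorem lintegral_max_dist_rpow_neg_le (hC : 0 ≤ C) (ha : 0 ≤ a) (hDa : D < a) (hs : 0 < s)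
    (hμ : ∀ r, 0 < r → μ (ball x r) ≤ ENNReal.ofReal (C * r ^ D)) :
    ∫⁻ ξ, ENNReal.ofReal (max (dist ξ x) s ^ (-a)) ∂μ ≤
      ENNReal.ofReal (C * 2 ^ a / (1 - 2 ^ (D - a)) * s ^ (D - a)) := by
  set q : ℝ := 2 ^ (D - a)
  have hq0 : 0 ≤ q := by positivity
  have hq1 : q < 1 := Real.rpow_lt_one_of_one_lt_of_neg one_lt_two (by linarith)
  calc ∫⁻ ξ, ENNReal.ofReal (max (dist ξ x) s ^ (-a)) ∂μ
      = ∫⁻ ξ in ⋃ k, disjointed (fun n : ℕ => ball x (2 ^ n * s)) k,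
          ENNReal.ofReal (max (dist ξ x) s ^ (-a)) ∂μ := by
        rw [iUnion_disjointed, iUnion_ball_two_pow_mul x hs, setLIntegral_univ]
    _ ≤ ∑' k, ∫⁻ ξ in disjointed (fun n : ℕ => ball x (2 ^ n * s)) k,
          ENNReal.ofReal (max (dist ξ x) s ^ (-a)) ∂μ :=
        lintegral_iUnion_le _ _
    _ ≤ ∑' k : ℕ, ENNReal.ofReal (C * 2 ^ a * s ^ (D - a) * q ^ k) :=
        ENNReal.tsum_le_tsum (setLIntegral_disjointed_ball_le μ ha hs hμ)
    _ = ENNReal.ofReal (C * 2 ^ a * s ^ (D - a) * (1 - q)⁻¹) := by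
        rw [← ENNReal.ofReal_tsum_of_nonneg (fun k => by positivity)
          ((summable_geometric_of_lt_one hq0 hq1).mul_left _), tsum_mul_left,
          tsum_geometric_of_lt_one hq0 hq1]
    _ = ENNReal.ofReal (C * 2 ^ a / (1 - q) * s ^ (D - a)) := by
        ring_nf

variable [OpensMeasurableSpace X]

theorem integral_max_dist_rpow_neg_le (hC : 0 ≤ C) (ha : 0 ≤ a) (hDa : D < a) (hs : 0 < s)
    (hμ : ∀ r, 0 < r → μ (ball x r) ≤ ENNReal.ofReal (C * r ^ D)) :
    ∫ ξ, max (dist ξ x) s ^ (-a) ∂μ ≤ C * 2 ^ a / (1 - 2 ^ (D - a)) * s ^ (D - a) := by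
  have hq : 0 < 1 - (2 : ℝ) ^ (D - a) :=
    sub_pos.2 (Real.rpow_lt_one_of_one_lt_of_neg one_lt_two (by linarith))
  rw [integral_eq_lintegral_of_nonneg_ae (ae_of_all _ fun ξ => by positivity)
    (continuous_max_dist_rpow x hs _).aestronglyMeasurable]
  exact ENNReal.toReal_le_of_le_ofReal (by positivity)
    (lintegral_max_dist_rpow_neg_le μ hC ha hDa hs hμ)

theorem rpow_mul_measureReal_ball_le_integral [IsFiniteMeasure μ] (x : X) (ha : 0 ≤ a)
    (hs : 0 < s) :
    s ^ (-a) * μ.real (ball x s) ≤ ∫ ξ, max (dist ξ x) s ^ (-a) ∂μ := by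
  have hint : Integrable (fun ξ => max (dist ξ x) s ^ (-a)) μ :=
    .of_bound (continuous_max_dist_rpow x hs _).aestronglyMeasurable (s ^ (-a)) <|
      ae_of_all _ fun ξ => by
        rw [Real.norm_of_nonneg (by positivity)]
        exact Real.rpow_le_rpow_of_nonpos hs (le_max_right _ _) (neg_nonpos.2 ha)
  calc s ^ (-a) * μ.real (ball x s) = ∫ ξ in ball x s, max (dist ξ x) s ^ (-a) ∂μ := by
        rw [setIntegral_congr_fun measurableSet_ball fun ξ hξ => by
          rw [max_eq_right (mem_ball.1 hξ).le], setIntegral_const, smul_eq_mul, mul_comm]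
    _ ≤ ∫ ξ, max (dist ξ x) s ^ (-a) ∂μ :=
        setIntegral_le_integral hint (ae_of_all _ fun ξ => by positivity)

end MaxDistIntegral

theorem harishChandra_anker_estimate_general
    {Ω : Type*} [MetricSpace Ω] [MeasurableSpace Ω] [BorelSpace Ω]
    (ν : Measure Ω) [IsProbabilityMeasure ν]
    (D : ℝ) (hD : 0 < D)
    (Cν : ℝ) (hCν : 1 ≤ Cν)
    (hAR : ∀ ξ : Ω, ∀ r : ℝ, 0 < r → r ≤ Metric.diam (Set.univ : Set Ω) →
      ENNReal.ofReal (Cν⁻¹ * r ^ D) ≤ ν (Metric.ball ξ r) ∧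
        ν (Metric.ball ξ r) ≤ ENNReal.ofReal (Cν * r ^ D)) :
    ∀ t : ℝ, 0 < t → ∃ C : ℝ, 1 ≤ C ∧
      ∀ η : Ω, ∀ s : ℝ, 0 < s → s ≤ Metric.diam (Set.univ : Set Ω) →
        C⁻¹ * s ^ (-(2*t*D))
            ≤ (∫ ξ, (max (dist ξ η) s) ^ (-(1 + 2*t) * D) ∂ν) ∧
        (∫ ξ, (max (dist ξ η) s) ^ (-(1 + 2*t) * D) ∂ν)
            ≤ C * s ^ (-(2*t*D)) := by
  intro t ht
  set a := (1 + 2 * t) * D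
  have ha : 0 ≤ a := by positivity
  have hDa : D < a := by nlinarith
  set Cup := max Cν (diam (univ : Set Ω) ^ (-D))
  have hCup : 0 ≤ Cup := le_max_of_le_left (by linarith)
  set K := Cup * 2 ^ a / (1 - 2 ^ (D - a))
  refine ⟨max Cν K, le_max_of_le_left hCν, fun η s hs hsd => ?_⟩
  have hup (r : ℝ) (hr : 0 < r) : ν (ball η r) ≤ ENNReal.ofReal (Cup * r ^ D) :=
    measure_ball_le_of_forall_le hD.le (hs.trans_le hsd) (fun r hr hrd => (hAR η r hr hrd).2) hr
  have hexp : -(2 * t * D) = D - a := by ring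
  rw [neg_mul, hexp]
  constructor
  · calc (max Cν K)⁻¹ * s ^ (D - a) ≤ Cν⁻¹ * s ^ (D - a) := by
          gcongr
          exact le_max_left _ _
      _ = s ^ (-a) * (Cν⁻¹ * s ^ D) := by rw [sub_eq_neg_add, Real.rpow_add hs]; ring
      _ ≤ s ^ (-a) * ν.real (ball η s) := by
          gcongr
          exact (ENNReal.ofReal_le_iff_le_toReal (measure_ne_top _ _)).1 (hAR η s hs hsd).1
      _ ≤ ∫ ξ, max (dist ξ η) s ^ (-a) ∂ν := rpow_mul_measureReal_ball_le_integral ν η ha hs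
  · calc ∫ ξ, max (dist ξ η) s ^ (-a) ∂ν ≤ K * s ^ (D - a) :=
          integral_max_dist_rpow_neg_le ν hCup ha hDa hs hup
      _ ≤ max Cν K * s ^ (D - a) := by gcongr; exact le_max_right _ _

/-- Harish-Chandra–Anker type estimate: for every `t > 0` there is `C ≥ 1` such that
for all `η ∈ Ω` and `s ∈ (0, diam Ω]`,
`C⁻¹ s^{-2tD} ≤ ∫ (max(d(ξ,η), s))^{-(1+2t)D} dν(ξ) ≤ C s^{-2tD}`. -/
theorem harishChandra_anker_estimate
    {Ω : Type*} [MetricSpace Ω] [CompactSpace Ω] [MeasurableSpace Ω] [BorelSpace Ω]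
    (ν : Measure Ω) [IsProbabilityMeasure ν]
    (D : ℝ) (hD : 0 < D)
    (hdiam : Metric.diam (Set.univ : Set Ω) ≤ 1)
    (Cν : ℝ) (hCν : 1 ≤ Cν)
    (hAR : ∀ ξ : Ω, ∀ r : ℝ, 0 < r → r ≤ Metric.diam (Set.univ : Set Ω) →
      ENNReal.ofReal (Cν⁻¹ * r ^ D) ≤ ν (Metric.ball ξ r) ∧
        ν (Metric.ball ξ r) ≤ ENNReal.ofReal (Cν * r ^ D)) :
    ∀ t : ℝ, 0 < t → ∃ C : ℝ, 1 ≤ C ∧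
      ∀ η : Ω, ∀ s : ℝ, 0 < s → s ≤ Metric.diam (Set.univ : Set Ω) →
        C⁻¹ * s ^ (-(2*t*D))
            ≤ (∫ ξ, (max (dist ξ η) s) ^ (-(1 + 2*t) * D) ∂ν) ∧
        (∫ ξ, (max (dist ξ η) s) ^ (-(1 + 2*t) * D) ∂ν)
            ≤ C * s ^ (-(2*t*D)) :=
  harishChandra_anker_estimate_general ν D hD Cν hCν hAR
end
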